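/- arXiv:1307.6435 — 11 statements merged into one kernel-verified Lean document; each statement's English description precedes it below -/
import Mathlib

section
/- Let (u_{n,t})_{n≥1}, indexed by t ∈ (0,1), be a family of sequences of complex numbers such that: (i) sup_{n≥1} |u_{n,t}| → 0 as t → 1⁻; (ii) there exist M > 0 and α ∈ (0,1) such that ∑_{n≥1} |u_{n,t}| ≤ M for all t ∈ (α,1); (iii) there exists S ∈ ℂ such that ∑_{n≥1} u_{n,t} → S as t → 1⁻. Then the infinite product ∏_{n≥1} (1 + u_{n,t}) converges for t close to 1 and lim_{t→1⁻} ∏_{n≥1} (1 + u_{n,t}) = e^{S}. -/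
/-!
For `t` close to `1` all `‖u t n‖ ≤ 1/2`, so `∏ (1 + u t n) = exp (∑ log (1 + u t n))`.
Since `‖log (1 + z) - z‖ ≤ ‖z‖ ^ 2 ≤ δ ‖z‖` once `‖z‖ ≤ δ ≤ 1/2`, the sums of logarithms differ
from `∑ u t n` by at most `δ M` with `δ = sup_n ‖u t n‖ → 0`; hence they tend to `S`, and the
products to `exp S`.
-/

open Filter Topology Complex

lemma Complex.norm_log_one_add_sub_self_le_mul {z : ℂ} {δ : ℝ} (hz : ‖z‖ ≤ δ) (hδ : δ ≤ 1 / 2) :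
    ‖log (1 + z) - z‖ ≤ δ * ‖z‖ := by
  have hz1 : ‖z‖ < 1 := by linarith
  have hinv : (1 - ‖z‖)⁻¹ ≤ 2 := by
    rw [inv_le_comm₀ (by linarith) two_pos]; linarith
  calc ‖log (1 + z) - z‖ ≤ ‖z‖ ^ 2 * (1 - ‖z‖)⁻¹ / 2 := norm_log_one_add_sub_self_le hz1
    _ ≤ ‖z‖ ^ 2 * 2 / 2 := by gcongr
    _ = ‖z‖ * ‖z‖ := by ring
    _ ≤ δ * ‖z‖ := by gcongr

lemma Complex.norm_tsum_log_one_add_sub_tsum_le {ι : Type*} {f : ι → ℂ} {δ : ℝ}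
    (hf : Summable (‖f ·‖)) (hfδ : ∀ i, ‖f i‖ ≤ δ) (hδ : δ ≤ 1 / 2) :
    ‖∑' i, log (1 + f i) - ∑' i, f i‖ ≤ δ * ∑' i, ‖f i‖ := by
  rw [← (summable_log_one_add_of_summable hf.of_norm).tsum_sub hf.of_norm]
  exact tsum_of_norm_bounded (hf.hasSum.mul_left δ)
    fun i => norm_log_one_add_sub_self_le_mul (hfδ i) hδ

lemma Complex.tendsto_tsum_log_one_add {ι α : Type*} {l : Filter α} {u : α → ι → ℂ} {M : ℝ}
    {S : ℂ} (hM : 0 < M) (hsmall : ∀ δ > 0, ∀ᶠ t in l, ∀ i, ‖u t i‖ ≤ δ)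
    (hbound : ∀ᶠ t in l, Summable (‖u t ·‖) ∧ ∑' i, ‖u t i‖ ≤ M)
    (hS : Tendsto (fun t => ∑' i, u t i) l (𝓝 S)) :
    Tendsto (fun t => ∑' i, log (1 + u t i)) l (𝓝 S) := by
  suffices h : Tendsto (fun t => ∑' i, log (1 + u t i) - ∑' i, u t i) l (𝓝 0) by
    simpa using h.add hS
  refine NormedAddGroup.tendsto_nhds_zero.mpr fun ε hε => ?_
  set δ := min (1 / 2) (ε / (2 * M))
  have hδ : 0 < δ := lt_min one_half_pos (by positivity)
  have hδM : δ * M < ε := calc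
    δ * M ≤ ε / (2 * M) * M := by gcongr; exact min_le_right _ _
    _ < ε := by field_simp; linarith
  filter_upwards [hsmall δ hδ, hbound] with t hu ⟨hsum, hsumM⟩
  calc _ ≤ δ * ∑' i, ‖u t i‖ := norm_tsum_log_one_add_sub_tsum_le hsum hu (min_le_left _ _)
    _ ≤ δ * M := by gcongr
    _ < ε := hδM

/-- If `(u_{n,t})` is a family of complex sequences such that `sup_n |u_{n,t}| → 0`
as `t → 1⁻`, the sums `∑_n |u_{n,t}|` are uniformly bounded for `t` near `1`, and
`∑_n u_{n,t} → S` as `t → 1⁻`, then the infinite product `∏_n (1 + u_{n,t})`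
converges for `t` close to `1` and tends to `e^S` as `t → 1⁻`. -/
theorem prod_one_add_tendsto_exp
    (u : ℝ → ℕ → ℂ) (S : ℂ)
    -- (i) `sup_{n} |u_{n,t}| → 0` as `t → 1⁻`
    (h1 : ∀ ε > (0 : ℝ), ∀ᶠ t in 𝓝[<] (1 : ℝ), ∀ n, ‖u t n‖ ≤ ε)
    -- (ii) uniform bound on `∑_n |u_{n,t}|` for `t ∈ (α, 1)`
    (h2 : ∃ M > (0 : ℝ), ∃ α ∈ Set.Ioo (0 : ℝ) 1, ∀ t ∈ Set.Ioo α 1,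
      ∀ N : ℕ, ∑ n ∈ Finset.range N, ‖u t n‖ ≤ M)
    -- (iii) `∑_n u_{n,t} → S` as `t → 1⁻`
    (h3 : Tendsto (fun t => ∑' n, u t n) (𝓝[<] (1 : ℝ)) (𝓝 S)) :
    ∀ ε > (0 : ℝ), ∀ᶠ t in 𝓝[<] (1 : ℝ), ∃ p : ℂ,
      Tendsto (fun N => ∏ n ∈ Finset.range N, (1 + u t n)) atTop (𝓝 p) ∧
      ‖p - Complex.exp S‖ ≤ ε := by
  obtain ⟨M, hM, α, hα, hpartial⟩ := h2
  have hbound : ∀ᶠ t in 𝓝[<] (1 : ℝ), Summable (‖u t ·‖) ∧ ∑' n, ‖u t n‖ ≤ M := by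
    filter_upwards [Ioo_mem_nhdsLT hα.2] with t ht
    have hsum := summable_of_sum_range_le (fun n => norm_nonneg _) (hpartial t ht)
    exact ⟨hsum, hsum.tsum_le_of_sum_range_le (hpartial t ht)⟩
  have hlog := tendsto_tsum_log_one_add hM h1 hbound h3
  intro ε hε
  have hexp := (continuous_exp.tendsto S).comp hlog (Metric.closedBall_mem_nhds _ hε)
  filter_upwards [hbound, h1 (1 / 2) one_half_pos, hexp] with t ⟨hsum, _⟩ hu hexp_t
  have hne : ∀ n, 1 + u t n ≠ 0 := fun n h => by
    have : ‖u t n‖ = 1 := by simp [eq_neg_of_add_eq_zero_right h]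
    linarith [hu n]
  have hprod := hasProd_of_hasSum_log hne (summable_log_one_add_of_summable hsum.of_norm).hasSum
  exact ⟨_, hprod.tendsto_prod_nat, mem_closedBall_iff_norm.mp hexp_t⟩
end

section
/- (Cramér's lemma, first part.) Let Z be a real random variable with E(Z) = 0 and E(|Z|³) < ∞, and let φ_Z(ξ) = E(e^{iξZ}) be its characteristic function. Then for every ξ ∈ ℝ, |φ_Z(ξ)|² ≤ exp(−ξ² E(Z²) + (4/3)|ξ|³ E(|Z|³)). -/
/-!
Write `φ` for the characteristic function at `ξ`, `s = ξ² E Z²` and `t = |ξ|³ E|Z|³`.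
The Taylor bound `|e^{ix} - 1 - ix + x²/2| ≤ |x|³/6` and `E Z = 0` give `|φ - (1 - s/2)| ≤ t/6`.
If `s ≤ 2`, then `|φ| ≤ 1 - s/2 + t/6 ≤ exp (-s/2 + t/6)`, and squaring suffices.
If `s > 2`, Jensen's inequality `(E Z²)^{3/2} ≤ E|Z|³` gives `s² < s³ ≤ t²`, so `s < t`,
the exponent `-s + 4t/3` is positive and `|φ| ≤ 1` suffices.
-/

open MeasureTheory Complex Finset

section Taylor

open Nat

theorem hasDerivAt_sum_I_mul_pow_div_factorial (n : ℕ) (t : ℝ) :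
    HasDerivAt (fun s : ℝ => ∑ k ∈ range (n + 1), (I * s) ^ k / (k ! : ℂ))
      (I * ∑ k ∈ range n, (I * t) ^ k / (k ! : ℂ)) t := by
  have hlin : HasDerivAt (fun s : ℝ => I * s) I t := by
    simpa using (ofRealCLM.hasDerivAt (x := t)).const_mul I
  have hterm (k : ℕ) : HasDerivAt (fun s : ℝ => (I * s) ^ (k + 1) / ((k + 1)! : ℂ))
      (I * ((I * t) ^ k / (k ! : ℂ))) t := by
    refine ((hlin.pow (k + 1)).div_const _).congr_deriv ?_
    rw [Nat.factorial_succ]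
    push_cast
    field_simp
  simp_rw [sum_range_succ' _ n, mul_sum, pow_zero, factorial_zero, cast_one, div_one]
  exact (HasDerivAt.fun_sum fun k _ => hterm k).add_const _

theorem norm_exp_I_mul_ofReal_sub_sum_le_of_nonneg (n : ℕ) {x : ℝ} (hx : 0 ≤ x) :
    ‖exp (I * x) - ∑ k ∈ range n, (I * x) ^ k / (k ! : ℂ)‖ ≤ x ^ n / n ! := by
  induction n generalizing x with
  | zero => simp [norm_exp_I_mul_ofReal]
  | succ n ih =>
    have hexp (t : ℝ) : HasDerivAt (fun s : ℝ => exp (I * s)) (I * exp (I * t)) t := by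
      simpa [mul_comm] using ((ofRealCLM.hasDerivAt (x := t)).const_mul I).cexp
    have hB (t : ℝ) : HasDerivAt (fun s : ℝ => s ^ (n + 1) / (n + 1)!) (t ^ n / n !) t := by
      refine ((hasDerivAt_pow (n + 1) t).div_const _).congr_deriv ?_
      rw [Nat.factorial_succ]
      push_cast
      field_simp
    refine image_norm_le_of_norm_deriv_right_le_deriv_boundary (a := 0) (b := x)
      (f' := fun t => I * (exp (I * t) - ∑ k ∈ range n, (I * t) ^ k / (k ! : ℂ)))
      (fun t _ => ((hexp t).sub (hasDerivAt_sum_I_mul_pow_div_factorial n t)).continuousAt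
        |>.continuousWithinAt)
      (fun t _ => ((hexp t).sub (hasDerivAt_sum_I_mul_pow_div_factorial n t)).congr_deriv
        (mul_sub _ _ _).symm |>.hasDerivWithinAt)
      (by simp [sum_range_succ']) hB (fun t ht => ?_) ⟨hx, le_rfl⟩
    rw [norm_mul, norm_I, one_mul]
    exact ih ht.1

theorem norm_exp_I_mul_ofReal_sub_sum_le (n : ℕ) (x : ℝ) :
    ‖exp (I * x) - ∑ k ∈ range n, (I * x) ^ k / (k ! : ℂ)‖ ≤ |x| ^ n / n ! := by
  rcases le_total 0 x with hx | hx
  · rw [abs_of_nonneg hx]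
    exact norm_exp_I_mul_ofReal_sub_sum_le_of_nonneg n hx
  · have hconj : exp (I * x) - ∑ k ∈ range n, (I * x) ^ k / (k ! : ℂ) =
        starRingEnd ℂ (exp (I * (-x : ℝ)) - ∑ k ∈ range n, (I * (-x : ℝ)) ^ k / (k ! : ℂ)) := by
      simp [map_sum, ← exp_conj]
    rw [hconj, RCLike.norm_conj, abs_of_nonpos hx]
    exact norm_exp_I_mul_ofReal_sub_sum_le_of_nonneg n (neg_nonneg.2 hx)

theorem norm_exp_I_mul_ofReal_sub_quadratic_le (x : ℝ) :
    ‖exp (I * x) - (((1 - x ^ 2 / 2 : ℝ) : ℂ) + I * x)‖ ≤ |x| ^ 3 / 6 := by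
  convert norm_exp_I_mul_ofReal_sub_sum_le 3 x using 3
  · simp [sum_range_succ, mul_pow]
    ring
  · norm_num [Nat.factorial]

end Taylor

theorem norm_exp_I_mul_ofReal_mul_ofReal (ξ x : ℝ) : ‖exp (I * ξ * x)‖ = 1 := by
  rw [mul_assoc, ← ofReal_mul, norm_exp_I_mul_ofReal]

theorem Real.sq_le_exp_of_le_abs_one_sub_add {r s t : ℝ} (hr0 : 0 ≤ r) (hr1 : r ≤ 1)
    (hs : 0 ≤ s) (ht : 0 ≤ t) (hst : s ^ 3 ≤ t ^ 2) (hr : r ≤ |1 - s / 2| + t / 6) :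
    r ^ 2 ≤ Real.exp (-s + 4 / 3 * t) := by
  rcases le_or_gt s 2 with hs2 | hs2
  · have hr' : r ≤ exp (-s / 2 + t / 6) := by
      rw [abs_of_nonneg (by linarith)] at hr
      linarith [add_one_le_exp (-s / 2 + t / 6)]
    calc r ^ 2 ≤ exp (-s / 2 + t / 6) ^ 2 := pow_le_pow_left₀ hr0 hr' 2
      _ = exp (-s + t / 3) := by rw [← exp_nat_mul]; ring_nf
      _ ≤ exp (-s + 4 / 3 * t) := exp_le_exp.2 (by linarith)
  · have hs_le_t : s ≤ t := by
      refine (pow_le_pow_iff_left₀ hs ht two_ne_zero).1 (le_trans ?_ hst)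
      nlinarith
    calc r ^ 2 ≤ 1 := pow_le_one₀ hr0 hr1
      _ ≤ exp (-s + 4 / 3 * t) := one_le_exp (by linarith)

section Moments

variable {Ω : Type*} [MeasurableSpace Ω] {P : Measure Ω} {Z : Ω → ℝ}

theorem MeasureTheory.MemLp.integrable_abs_pow_three (hZ : MemLp Z 3 P) :
    Integrable (fun ω => |Z ω| ^ 3) P := by
  simpa [Real.norm_eq_abs] using hZ.integrable_norm_pow (by norm_num : (3 : ℕ) ≠ 0)

theorem integral_sq_pow_three_le [IsProbabilityMeasure P] (hZ : MemLp Z 3 P) :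
    (∫ ω, Z ω ^ 2 ∂P) ^ 3 ≤ (∫ ω, |Z ω| ^ 3 ∂P) ^ 2 := by
  have hZ2 : Integrable (fun ω => Z ω ^ 2) P :=
    (hZ.mono_exponent (by norm_num : (2 : ENNReal) ≤ 3)).integrable_sq
  have hcomp : (fun ω => (Z ω ^ 2) ^ (3 / 2 : ℝ)) = fun ω => |Z ω| ^ 3 := by
    ext ω
    rw [← sq_abs, ← Real.rpow_natCast, ← Real.rpow_mul (abs_nonneg _)]
    norm_num
  have hjensen : (∫ ω, Z ω ^ 2 ∂P) ^ (3 / 2 : ℝ) ≤ ∫ ω, |Z ω| ^ 3 ∂P := by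
    rw [← hcomp]
    exact (convexOn_rpow (by norm_num)).map_integral_le
      (Real.continuous_rpow_const (by norm_num)).continuousOn isClosed_Ici
      (Filter.Eventually.of_forall fun ω => sq_nonneg (Z ω)) hZ2
      (by simpa only [Function.comp_def, hcomp] using hZ.integrable_abs_pow_three)
  have hm2 : 0 ≤ ∫ ω, Z ω ^ 2 ∂P := integral_nonneg fun ω => sq_nonneg _
  calc (∫ ω, Z ω ^ 2 ∂P) ^ 3 = ((∫ ω, Z ω ^ 2 ∂P) ^ (3 / 2 : ℝ)) ^ 2 := by
        rw [← Real.rpow_natCast _ 2, ← Real.rpow_mul hm2]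
        norm_num
    _ ≤ (∫ ω, |Z ω| ^ 3 ∂P) ^ 2 := pow_le_pow_left₀ (by positivity) hjensen 2

theorem norm_integral_exp_I_mul_sub_le [IsProbabilityMeasure P] (hZ : MemLp Z 3 P)
    (hZmean : ∫ ω, Z ω ∂P = 0) (ξ : ℝ) :
    ‖∫ ω, exp (I * ξ * Z ω) ∂P - ((1 - ξ ^ 2 * (∫ ω, Z ω ^ 2 ∂P) / 2 : ℝ) : ℂ)‖ ≤
      |ξ| ^ 3 * (∫ ω, |Z ω| ^ 3 ∂P) / 6 := by
  set quadratic : Ω → ℂ := fun ω => ((1 - (ξ * Z ω) ^ 2 / 2 : ℝ) : ℂ) + I * ((ξ * Z ω : ℝ) : ℂ)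
    with quadratic_def
  have hZ1 : Integrable Z P := hZ.integrable (by norm_num)
  have hZ2 : Integrable (fun ω => Z ω ^ 2) P :=
    (hZ.mono_exponent (by norm_num : (2 : ENNReal) ≤ 3)).integrable_sq
  have hsq_int : Integrable (fun ω => (ξ * Z ω) ^ 2) P := by
    simpa only [mul_pow] using hZ2.const_mul (ξ ^ 2)
  have hreal_int : Integrable (fun ω => 1 - (ξ * Z ω) ^ 2 / 2) P :=
    (integrable_const 1).sub (hsq_int.div_const 2)
  have hquad_int : Integrable quadratic P :=
    hreal_int.ofReal.add ((hZ1.const_mul ξ).ofReal.const_mul I)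
  have hquad : ∫ ω, quadratic ω ∂P = ((1 - ξ ^ 2 * (∫ ω, Z ω ^ 2 ∂P) / 2 : ℝ) : ℂ) := by
    simp only [quadratic_def]
    rw [integral_add (by exact hreal_int.ofReal) (by exact (hZ1.const_mul ξ).ofReal.const_mul I),
      integral_const_mul, integral_complex_ofReal, integral_complex_ofReal, integral_const_mul,
      hZmean, integral_sub (integrable_const 1) (hsq_int.div_const 2), integral_const, integral_div]
    simp [mul_pow, integral_const_mul]
  have hexp_int : Integrable (fun ω => exp (I * ξ * Z ω)) P := by
    refine Integrable.of_bound ((by fun_prop : Continuous fun x : ℝ => exp (I * ξ * x))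
      |>.comp_aestronglyMeasurable hZ.1) 1
      (Filter.Eventually.of_forall fun ω => (norm_exp_I_mul_ofReal_mul_ofReal ξ (Z ω)).le)
  have hrem_le (ω : Ω) : ‖exp (I * ξ * Z ω) - quadratic ω‖ ≤ |ξ| ^ 3 * |Z ω| ^ 3 / 6 := by
    rw [mul_assoc, ← ofReal_mul, ← mul_pow, ← abs_mul]
    exact norm_exp_I_mul_ofReal_sub_quadratic_le (ξ * Z ω)
  calc ‖∫ ω, exp (I * ξ * Z ω) ∂P - ((1 - ξ ^ 2 * (∫ ω, Z ω ^ 2 ∂P) / 2 : ℝ) : ℂ)‖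
      = ‖∫ ω, (exp (I * ξ * Z ω) - quadratic ω) ∂P‖ := by
        rw [integral_sub hexp_int hquad_int, hquad]
    _ ≤ ∫ ω, |ξ| ^ 3 * |Z ω| ^ 3 / 6 ∂P :=
        norm_integral_le_of_norm_le ((hZ.integrable_abs_pow_three.const_mul _).div_const _)
          (Filter.Eventually.of_forall hrem_le)
    _ = |ξ| ^ 3 * (∫ ω, |Z ω| ^ 3 ∂P) / 6 := by
        rw [integral_div, integral_const_mul]

end Moments

/-- Cramér's lemma, first part: if `Z` is a centered real random variable with
`E|Z|³ < ∞`, then for every `ξ ∈ ℝ`,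
`|φ_Z(ξ)|² ≤ exp(−ξ² E(Z²) + (4/3)|ξ|³ E|Z|³)`. -/
theorem cramer_charFun_bound
    {Ω : Type*} [MeasurableSpace Ω] (P : Measure Ω) [IsProbabilityMeasure P]
    (Z : Ω → ℝ) (hZ3 : MemLp Z 3 P) (hZmean : ∫ ω, Z ω ∂P = 0) (ξ : ℝ) :
    ‖∫ ω, Complex.exp (Complex.I * (ξ : ℂ) * ((Z ω : ℝ) : ℂ)) ∂P‖ ^ 2 ≤
      Real.exp (-ξ ^ 2 * (∫ ω, Z ω ^ 2 ∂P) + (4 / 3) * |ξ| ^ 3 * ∫ ω, |Z ω| ^ 3 ∂P) := by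
  set φ := ∫ ω, exp (I * ξ * Z ω) ∂P
  set m2 := ∫ ω, Z ω ^ 2 ∂P
  set m3 := ∫ ω, |Z ω| ^ 3 ∂P
  have hφ_le_one : ‖φ‖ ≤ 1 := by
    simpa using norm_integral_le_of_norm_le_const (μ := P)
      (Filter.Eventually.of_forall fun ω => (norm_exp_I_mul_ofReal_mul_ofReal ξ (Z ω)).le)
  have hmoments : (ξ ^ 2 * m2) ^ 3 ≤ (|ξ| ^ 3 * m3) ^ 2 := by
    calc (ξ ^ 2 * m2) ^ 3 = (|ξ| ^ 3) ^ 2 * m2 ^ 3 := by rw [← sq_abs ξ]; ring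
      _ ≤ (|ξ| ^ 3) ^ 2 * m3 ^ 2 :=
        mul_le_mul_of_nonneg_left (integral_sq_pow_three_le hZ3) (by positivity)
      _ = (|ξ| ^ 3 * m3) ^ 2 := by ring
  have hφ_near : ‖φ‖ ≤ |1 - ξ ^ 2 * m2 / 2| + |ξ| ^ 3 * m3 / 6 := by
    refine (norm_le_norm_add_norm_sub' φ ((1 - ξ ^ 2 * m2 / 2 : ℝ) : ℂ)).trans (add_le_add ?_ ?_)
    · rw [norm_real, Real.norm_eq_abs]
    · exact norm_integral_exp_I_mul_sub_le hZ3 hZmean ξ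
  have hm2 : 0 ≤ m2 := integral_nonneg fun ω => sq_nonneg _
  have hm3 : 0 ≤ m3 := integral_nonneg fun ω => by positivity
  convert Real.sq_le_exp_of_le_abs_one_sub_add (norm_nonneg φ) hφ_le_one (by positivity)
    (by positivity) hmoments hφ_near using 2
  ring
end

section
/- For integers a ≥ 1, p ≥ 1, q ≥ 1, one has, as r → 0⁺: ∑_{k=1}^{∞} k^p e^{−a k r}/(1+e^{−k r})^q = (1/r^{p+1}) ∫₀^{∞} u^p e^{−a u}/(1+e^{−u})^q du + O(1/r^p). -/
/-! With `f u = u ^ p * e^{-a u} / (1 + e^{-u}) ^ q`, the `k`-th term of the series is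
`f (k r) / r ^ p`, so the claim says that the right-endpoint Riemann sum `r ∑ f (k r)` is within
`O(r)` of `∫₀^∞ f`. On each cell `((k - 1) r, k r]` the value `f (k r)` differs from `f` by at most
the variation `∫ |f'|` over the cell, so the total error is at most `r ∫₀^∞ |f'|`; this is finite
because `f` and `f'` are dominated by polynomials times `e^{-a u}`. -/

open MeasureTheory Set Real

section RiemannSum

variable {f f' : ℝ → ℝ}

theorem hasSum_integral_Ioc_nat_mul {E : Type*} [NormedAddCommGroup E] [NormedSpace ℝ E]
    {g : ℝ → E} {r : ℝ} (hr : 0 < r) (hg : IntegrableOn g (Ioi 0)) :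
    HasSum (fun k : ℕ => ∫ x in Ioc (k * r) ((k + 1) * r), g x) (∫ x in Ioi 0, g x) := by
  have hmono : Monotone fun k : ℕ => (k : ℝ) * r := fun _ _ hij =>
    mul_le_mul_of_nonneg_right (Nat.cast_le.2 hij) hr.le
  have hunbdd : ¬BddAbove (range fun k : ℕ => (k : ℝ) * r) := by
    rintro ⟨M, hM⟩
    obtain ⟨k, hk⟩ := exists_nat_gt (M / r)
    have := hM (mem_range_self k)
    rw [div_lt_iff₀ hr] at hk
    linarith
  have hcover := iUnion_Ioc_map_succ_eq_Ioi (fun k => hmono bot_le) hunbdd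
  have hdisj := hmono.pairwise_disjoint_on_Ioc_succ
  simp only [Order.succ_eq_add_one, Nat.cast_add, Nat.cast_one, Nat.bot_eq_zero, Nat.cast_zero,
    zero_mul] at hcover hdisj
  rw [← hcover] at hg ⊢
  exact hasSum_integral_iUnion (fun _ => measurableSet_Ioc) hdisj hg

theorem abs_sub_le_setIntegral_abs_deriv {a b x y : ℝ}
    (hderiv : ∀ t ∈ Icc a b, HasDerivAt f (f' t) t) (hf' : IntegrableOn f' (Ioc a b))
    (hx : x ∈ Icc a b) (hy : y ∈ Icc a b) (hxy : x ≤ y) :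
    |f y - f x| ≤ ∫ t in Ioc a b, |f' t| := by
  have hsub : Ioc x y ⊆ Ioc a b := Ioc_subset_Ioc hx.1 hy.2
  rw [← intervalIntegral.integral_eq_sub_of_hasDerivAt
    (fun t ht => hderiv t (uIcc_subset_Icc hx hy ht))
    ((intervalIntegrable_iff_integrableOn_Ioc_of_le hxy).2 (hf'.mono_set hsub))]
  calc |∫ t in x..y, f' t| ≤ ∫ t in Ioc x y, |f' t| := by
        simpa only [Real.norm_eq_abs, uIoc_of_le hxy] using
          intervalIntegral.norm_integral_le_integral_norm_uIoc (f := f') (a := x) (b := y)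
            (μ := volume)
    _ ≤ ∫ t in Ioc a b, |f' t| :=
        setIntegral_mono_set hf'.abs (ae_of_all _ fun _ => abs_nonneg _) hsub.eventuallyLE

theorem abs_mul_sub_setIntegral_Ioc_le {a b : ℝ} (hab : a ≤ b)
    (hderiv : ∀ t ∈ Icc a b, HasDerivAt f (f' t) t) (hf' : IntegrableOn f' (Ioc a b)) :
    |(b - a) * f b - ∫ x in Ioc a b, f x| ≤ (b - a) * ∫ t in Ioc a b, |f' t| := by
  have hf : IntegrableOn f (Ioc a b) :=
    (ContinuousOn.integrableOn_Icc fun x hx =>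
      (hderiv x hx).continuousAt.continuousWithinAt).mono_set Ioc_subset_Icc_self
  have hvol : volume.real (Ioc a b) = b - a := by simp [hab]
  have hfin : volume (Ioc a b) < ⊤ := measure_Ioc_lt_top
  calc |(b - a) * f b - ∫ x in Ioc a b, f x| = ‖∫ x in Ioc a b, (f b - f x)‖ := by
        rw [integral_sub (integrableOn_const hfin.ne).integrable hf, setIntegral_const, hvol,
          smul_eq_mul, Real.norm_eq_abs]
    _ ≤ (∫ t in Ioc a b, |f' t|) * volume.real (Ioc a b) :=
        norm_setIntegral_le_of_norm_le_const hfin fun x hx =>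
          abs_sub_le_setIntegral_abs_deriv hderiv hf' (Ioc_subset_Icc_self hx) (right_mem_Icc.2 hab)
            hx.2
    _ = (b - a) * ∫ t in Ioc a b, |f' t| := by rw [hvol, mul_comm]

theorem abs_mul_tsum_sub_integral_Ioi_le {r : ℝ} (hr : 0 < r)
    (hderiv : ∀ x ∈ Ici 0, HasDerivAt f (f' x) x) (hf : IntegrableOn f (Ioi 0))
    (hf' : IntegrableOn f' (Ioi 0)) :
    Summable (fun k : ℕ => f ((k + 1) * r)) ∧
      |r * ∑' k : ℕ, f ((k + 1) * r) - ∫ x in Ioi 0, f x| ≤ r * ∫ x in Ioi 0, |f' x| := by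
  have hcell (k : ℕ) : |r * f ((k + 1) * r) - ∫ x in Ioc (k * r) ((k + 1) * r), f x|
      ≤ r * ∫ x in Ioc (k * r) ((k + 1) * r), |f' x| := by
    have hk : (0 : ℝ) ≤ k * r := by positivity
    have hlen : ((k : ℝ) + 1) * r - k * r = r := by ring
    have := abs_mul_sub_setIntegral_Ioc_le (a := k * r) (b := (k + 1) * r) (by linarith)
      (fun t ht => hderiv t (hk.trans ht.1))
      (hf'.mono_set (Ioc_subset_Ioi_self.trans (Ioi_subset_Ioi hk)))
    rwa [hlen] at this
  have hI := hasSum_integral_Ioc_nat_mul hr hf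
  have hV := (hasSum_integral_Ioc_nat_mul hr hf'.abs).mul_left r
  have herr : Summable fun k : ℕ => r * f ((k + 1) * r) - ∫ x in Ioc (k * r) ((k + 1) * r), f x :=
    hV.summable.of_norm_bounded hcell
  have hsum : Summable fun k : ℕ => f ((k + 1) * r) :=
    (summable_mul_left_iff hr.ne').1 ((herr.add hI.summable).congr fun k => by ring)
  refine ⟨hsum, ?_⟩
  rw [← hI.tsum_eq, ← tsum_mul_left, ← (hsum.mul_left r).tsum_sub hI.summable]
  exact tsum_of_norm_bounded hV fun k => (Real.norm_eq_abs _).trans_le (hcell k)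

end RiemannSum

theorem integrableOn_pow_mul_exp_neg_mul (n : ℕ) {a : ℝ} (ha : 0 < a) :
    IntegrableOn (fun u : ℝ => u ^ n * exp (-a * u)) (Ioi 0) := by
  simpa only [rpow_natCast, rpow_one] using
    integrableOn_rpow_mul_exp_neg_mul_rpow (s := n) (p := 1) (by linarith [n.cast_nonneg (α := ℝ)])
      one_pos ha

noncomputable def expWeight (a : ℝ) (q : ℕ) (u : ℝ) : ℝ := exp (-a * u) / (1 + exp (-u)) ^ q

section ExpWeight

variable {a : ℝ} {q : ℕ}

theorem expWeight_nonneg (u : ℝ) : 0 ≤ expWeight a q u := by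
  unfold expWeight; positivity

theorem expWeight_le_exp (u : ℝ) : expWeight a q u ≤ exp (-a * u) :=
  div_le_self (exp_pos _).le (one_le_pow₀ (by linarith [exp_pos (-u)]))

theorem continuous_expWeight : Continuous (expWeight a q) :=
  (by fun_prop : Continuous fun u => exp (-a * u)).div (by fun_prop) fun u => by positivity

theorem hasDerivAt_expWeight (u : ℝ) :
    HasDerivAt (expWeight a q) ((q * (exp (-u) / (1 + exp (-u))) - a) * expWeight a q u) u := by
  have hD : 0 < 1 + exp (-u) := by positivity
  have hnum : HasDerivAt (fun x => exp (-a * x)) (exp (-a * u) * -a) u := by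
    simpa using ((hasDerivAt_id u).const_mul (-a)).exp
  have hden : HasDerivAt (fun x => (1 + exp (-x)) ^ q)
      (q * (1 + exp (-u)) ^ (q - 1) * -exp (-u)) u := by
    have h1 : HasDerivAt (fun x => 1 + exp (-x)) (-exp (-u)) u := by
      simpa using ((hasDerivAt_id u).neg.exp).const_add 1
    simpa using h1.fun_pow q
  refine (hnum.div hden (pow_pos hD q).ne').congr_deriv ?_
  unfold expWeight
  rcases q with _ | q
  · simp only [pow_zero, CharP.cast_eq_zero, zero_mul, div_one]
    ring
  · simp only [Nat.add_sub_cancel]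
    field_simp
    ring

theorem hasDerivAt_pow_mul_expWeight (p : ℕ) (u : ℝ) :
    HasDerivAt (fun x => x ^ p * expWeight a q x)
      (p * u ^ (p - 1) * expWeight a q u +
        u ^ p * ((q * (exp (-u) / (1 + exp (-u))) - a) * expWeight a q u)) u :=
  (hasDerivAt_pow p u).mul (hasDerivAt_expWeight u)

theorem abs_deriv_pow_mul_expWeight_le (ha : 0 ≤ a) (p : ℕ) {u : ℝ} (hu : 0 ≤ u) :
    |deriv (fun x => x ^ p * expWeight a q x) u| ≤
      p * (u ^ (p - 1) * exp (-a * u)) + (a + q) * (u ^ p * exp (-a * u)) := by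
  rw [(hasDerivAt_pow_mul_expWeight p u).deriv]
  have hσ0 : 0 ≤ exp (-u) / (1 + exp (-u)) := by positivity
  have hσ1 : exp (-u) / (1 + exp (-u)) ≤ 1 := div_le_one_of_le₀ (by linarith) (by positivity)
  have hrate : |q * (exp (-u) / (1 + exp (-u))) - a| ≤ a + q := by
    rw [abs_le]; constructor <;> nlinarith [(q.cast_nonneg : (0 : ℝ) ≤ q)]
  have hw0 := expWeight_nonneg (a := a) (q := q) u
  have hw := expWeight_le_exp (a := a) (q := q) u
  calc _ ≤ |p * u ^ (p - 1) * expWeight a q u| +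
        |u ^ p * ((q * (exp (-u) / (1 + exp (-u))) - a) * expWeight a q u)| := abs_add_le _ _
    _ = p * (u ^ (p - 1) * expWeight a q u) +
        u ^ p * (|q * (exp (-u) / (1 + exp (-u))) - a| * expWeight a q u) := by
      simp only [abs_mul, abs_of_nonneg hw0, abs_of_nonneg (pow_nonneg hu _), Nat.abs_cast]
      ring
    _ ≤ p * (u ^ (p - 1) * exp (-a * u)) + u ^ p * ((a + q) * exp (-a * u)) := by gcongr
    _ = p * (u ^ (p - 1) * exp (-a * u)) + (a + q) * (u ^ p * exp (-a * u)) := by ring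

theorem integrableOn_pow_mul_expWeight (ha : 0 < a) (p : ℕ) :
    IntegrableOn (fun x => x ^ p * expWeight a q x) (Ioi 0) := by
  refine (integrableOn_pow_mul_exp_neg_mul p ha).mono'
    ((continuous_pow p).mul continuous_expWeight).aestronglyMeasurable
    (ae_restrict_of_forall_mem measurableSet_Ioi fun u (hu : 0 < u) => ?_)
  rw [Real.norm_of_nonneg (by have := expWeight_nonneg (a := a) (q := q) u; positivity)]
  exact mul_le_mul_of_nonneg_left (expWeight_le_exp u) (by positivity)

theorem integrableOn_deriv_pow_mul_expWeight (ha : 0 < a) (p : ℕ) :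
    IntegrableOn (deriv fun x => x ^ p * expWeight a q x) (Ioi 0) :=
  (((integrableOn_pow_mul_exp_neg_mul (p - 1) ha).const_mul p).add
    ((integrableOn_pow_mul_exp_neg_mul p ha).const_mul (a + q))).mono'
    (measurable_deriv _).aestronglyMeasurable
    (ae_restrict_of_forall_mem measurableSet_Ioi fun _ hu =>
      abs_deriv_pow_mul_expWeight_le ha.le p (le_of_lt hu))

theorem tsum_pow_mul_exp_div_eq {p : ℕ} (hp : p ≠ 0) {r : ℝ} (hr : 0 < r)
    (hsum : Summable fun k : ℕ => ((k + 1) * r) ^ p * expWeight a q ((k + 1) * r)) :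
    ∑' k : ℕ, (k : ℝ) ^ p * exp (-a * k * r) / (1 + exp (-(k : ℝ) * r)) ^ q
      = (∑' k : ℕ, ((k + 1) * r) ^ p * expWeight a q ((k + 1) * r)) / r ^ p := by
  have hshift : ∑' k : ℕ, ((k : ℝ) * r) ^ p * expWeight a q (k * r)
      = ∑' k : ℕ, ((k + 1) * r) ^ p * expWeight a q ((k + 1) * r) := by
    rw [tsum_eq_zero_add' (by simpa only [Nat.cast_add, Nat.cast_one] using hsum)]
    simp [zero_pow hp]
  rw [← hshift, ← tsum_div_const]
  refine tsum_congr fun k => ?_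
  simp only [expWeight, mul_pow]
  field_simp

end ExpWeight

theorem sum_kpow_exp_asymptotic_general (a p q : ℕ) (ha : 1 ≤ a) (hp : 1 ≤ p) :
    ∃ C > (0 : ℝ), ∃ r₀ > (0 : ℝ), ∀ r ∈ Set.Ioo (0 : ℝ) r₀,
      |(∑' k : ℕ, (k : ℝ) ^ p * Real.exp (-(a : ℝ) * k * r) /
            (1 + Real.exp (-(k : ℝ) * r)) ^ q) -
          (1 / r ^ (p + 1)) *
            ∫ u in Set.Ioi (0 : ℝ), u ^ p * Real.exp (-(a : ℝ) * u) /
              (1 + Real.exp (-u)) ^ q| ≤ C / r ^ p := by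
  set f : ℝ → ℝ := fun x => x ^ p * expWeight a q x
  set V := ∫ x in Ioi 0, |deriv f x|
  have ha' : (0 : ℝ) < a := by exact_mod_cast ha
  have hV : 0 ≤ V := setIntegral_nonneg measurableSet_Ioi fun _ _ => abs_nonneg _
  refine ⟨V + 1, by positivity, 1, one_pos, fun r ⟨hr, _⟩ => ?_⟩
  obtain ⟨hsum, hbound⟩ := abs_mul_tsum_sub_integral_Ioi_le (f := f) (f' := deriv f) hr
    (fun x _ => (hasDerivAt_pow_mul_expWeight p x).differentiableAt.hasDerivAt)
    (integrableOn_pow_mul_expWeight ha' p) (integrableOn_deriv_pow_mul_expWeight ha' p)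
  have hintegral : ∫ u in Ioi (0 : ℝ), u ^ p * exp (-(a : ℝ) * u) / (1 + exp (-u)) ^ q
      = ∫ x in Ioi 0, f x := by
    simp only [f, expWeight, mul_div_assoc]
  rw [tsum_pow_mul_exp_div_eq (by omega) hr hsum, hintegral]
  set S := ∑' k : ℕ, f ((k + 1) * r)
  set I := ∫ x in Ioi 0, f x
  calc _ = |r * S - I| / r ^ (p + 1) := by
        rw [show S / r ^ p - 1 / r ^ (p + 1) * I = (r * S - I) / r ^ (p + 1) by
          field_simp; ring, abs_div, abs_of_pos (pow_pos hr _)]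
    _ ≤ r * V / r ^ (p + 1) := by gcongr
    _ = V / r ^ p := by field_simp; ring
    _ ≤ (V + 1) / r ^ p := by gcongr; linarith

/-- Euler–Maclaurin asymptotics: for integers `a, p, q ≥ 1`, as `r → 0⁺`,
`∑_{k≥1} k^p e^{−akr}/(1+e^{−kr})^q = (1/r^{p+1}) ∫₀^∞ u^p e^{−au}/(1+e^{−u})^q du + O(1/r^p)`.
(The `k = 0` term of the sum vanishes since `p ≥ 1`.) -/
theorem sum_kpow_exp_asymptotic (a p q : ℕ) (ha : 1 ≤ a) (hp : 1 ≤ p) (hq : 1 ≤ q) :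
    ∃ C > (0 : ℝ), ∃ r₀ > (0 : ℝ), ∀ r ∈ Set.Ioo (0 : ℝ) r₀,
      |(∑' k : ℕ, (k : ℝ) ^ p * Real.exp (-(a : ℝ) * k * r) /
            (1 + Real.exp (-(k : ℝ) * r)) ^ q) -
          (1 / r ^ (p + 1)) *
            ∫ u in Set.Ioi (0 : ℝ), u ^ p * Real.exp (-(a : ℝ) * u) /
              (1 + Real.exp (-u)) ^ q| ≤ C / r ^ p :=
  sum_kpow_exp_asymptotic_general a p q ha hp
end

section
/- Let m(t) = ∑_{k=1}^{∞} k tᵏ/(1+tᵏ) for t ∈ (0,1). Then, as r → 0⁺, m(e^{−r}) = π²/(12 r²) + O(1/r). -/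
open Real Finset

/-!
Expanding `1 / (1 + tᵏ)` as a geometric series and summing over `k` first turns the mean into
the alternating Lambert series `∑ⱼ (-1)ʲ tʲ⁺¹ / (1 - tʲ⁺¹)²`. At `t = e⁻ʳ` its `j`-th term is
`1 / (4 sinh² (x / 2))` with `x = (j + 1) r`, which differs from `1 / x²` by at most
`min (1 / 4) (1 / x²) ≤ (5 / 4) / (1 + x²)`. The alternating sum of the `1 / ((j + 1) r)²` is
`η(2) / r² = π² / (12 r²)`, and the errors add up to at most `(5 / 4) ∑ⱼ 1 / (1 + ((j + 1) r)²)`,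
which is bounded by `(5 / 4) ∫₀^∞ dx / (1 + (x r)²) = 5π / (8 r)`.
-/

section Lambert

variable {𝕜 : Type*} [NormedField 𝕜] {t : 𝕜}

lemma hasSum_coe_mul_pow_mul_neg_pow_row (ht : ‖t‖ < 1) (k : ℕ) :
    HasSum (fun j : ℕ ↦ (k : 𝕜) * t ^ k * (-t ^ k) ^ j) ((k : 𝕜) * t ^ k / (1 + t ^ k)) := by
  rcases k.eq_zero_or_pos with rfl | hk
  · simp [hasSum_zero]
  have hnorm : ‖-t ^ k‖ < 1 := by
    rw [norm_neg, norm_pow]; exact pow_lt_one₀ (norm_nonneg _) ht hk.ne'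
  simpa [div_eq_mul_inv] using (hasSum_geometric_of_norm_lt_one hnorm).mul_left ((k : 𝕜) * t ^ k)

lemma hasSum_coe_mul_pow_mul_neg_pow_column (ht : ‖t‖ < 1) (j : ℕ) :
    HasSum (fun k : ℕ ↦ (k : 𝕜) * t ^ k * (-t ^ k) ^ j)
      ((-1) ^ j * (t ^ (j + 1) / (1 - t ^ (j + 1)) ^ 2)) := by
  have hnorm : ‖t ^ (j + 1)‖ < 1 := by
    rw [norm_pow]; exact pow_lt_one₀ (norm_nonneg _) ht (by omega)
  have hterm (k : ℕ) : (k : 𝕜) * t ^ k * (-t ^ k) ^ j = (-1) ^ j * (k * (t ^ (j + 1)) ^ k) := by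
    rw [neg_pow, ← pow_mul, ← pow_mul, add_one_mul, pow_add]
    ring
  simpa only [hterm] using (hasSum_coe_mul_geometric_of_norm_lt_one hnorm).mul_left ((-1 : 𝕜) ^ j)

variable [CompleteSpace 𝕜]

lemma summable_uncurry_coe_mul_pow_mul_neg_pow (ht : ‖t‖ < 1) :
    Summable (Function.uncurry fun k j : ℕ ↦ (k : 𝕜) * t ^ k * (-t ^ k) ^ j) := by
  set s := ‖t‖
  have hs : ‖s‖ < 1 := by rwa [norm_norm]
  have hrow : Summable (fun k : ℕ ↦ k * ‖(1 : 𝕜)‖ * s ^ k) := by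
    have := ((hasSum_coe_mul_geometric_of_norm_lt_one hs).summable).mul_right ‖(1 : 𝕜)‖
    exact this.congr fun k ↦ by ring
  have hcol : Summable (fun j : ℕ ↦ s ^ j) := summable_geometric_of_lt_one (norm_nonneg t) ht
  refine Summable.of_norm_bounded (hrow.mul_of_nonneg hcol (fun _ ↦ by positivity)
    (fun _ ↦ by positivity)) fun ⟨k, j⟩ ↦ ?_
  rcases k.eq_zero_or_pos with rfl | hk
  · simp
  have hsk : s ^ k ≤ s := pow_le_of_le_one (norm_nonneg t) ht.le hk.ne'
  simp only [Function.uncurry_apply_pair, norm_mul, norm_pow, norm_neg]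
  gcongr
  exact Nat.norm_cast_le k

lemma tsum_coe_mul_pow_div_one_add_pow (ht : ‖t‖ < 1) :
    ∑' k : ℕ, (k : 𝕜) * t ^ k / (1 + t ^ k)
      = ∑' j : ℕ, (-1) ^ j * (t ^ (j + 1) / (1 - t ^ (j + 1)) ^ 2) := by
  calc ∑' k : ℕ, (k : 𝕜) * t ^ k / (1 + t ^ k)
      = ∑' (k : ℕ) (j : ℕ), (k : 𝕜) * t ^ k * (-t ^ k) ^ j :=
        tsum_congr fun k ↦ (hasSum_coe_mul_pow_mul_neg_pow_row ht k).tsum_eq.symm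
    _ = ∑' (j : ℕ) (k : ℕ), (k : 𝕜) * t ^ k * (-t ^ k) ^ j :=
        (summable_uncurry_coe_mul_pow_mul_neg_pow ht).tsum_comm.symm
    _ = _ := tsum_congr fun j ↦ (hasSum_coe_mul_pow_mul_neg_pow_column ht j).tsum_eq

end Lambert

lemma Real.sinh_le_mul_cosh {y : ℝ} (hy : 0 ≤ y) : sinh y ≤ y * cosh y := by
  have hderiv (u : ℝ) : HasDerivAt (fun u ↦ u * cosh u - sinh u) (u * sinh u) u := by
    have h := ((hasDerivAt_id' u).mul (hasDerivAt_cosh u)).sub (hasDerivAt_sinh u)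
    rwa [one_mul, add_sub_cancel_left] at h
  have hmono : MonotoneOn (fun u ↦ u * cosh u - sinh u) (Set.Ici 0) := by
    refine monotoneOn_of_deriv_nonneg (convex_Ici 0) (by fun_prop) (by fun_prop) fun u hu ↦ ?_
    rw [interior_Ici] at hu
    rw [(hderiv u).deriv]
    exact mul_nonneg hu.le (sinh_nonneg_iff.2 hu.le)
  simpa using hmono Set.self_mem_Ici hy hy

lemma exp_neg_div_one_sub_exp_neg_sq (x : ℝ) :
    exp (-x) / (1 - exp (-x)) ^ 2 = 1 / (4 * sinh (x / 2) ^ 2) := by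
  have hsq : exp (-x) = exp (-(x / 2)) ^ 2 := by rw [← exp_nat_mul]; ring_nf
  have hsub : 1 - exp (-x) = exp (-(x / 2)) * (2 * sinh (x / 2)) := by
    have : exp (-(x / 2)) * exp (x / 2) = 1 := by rw [← exp_add]; simp
    rw [sinh_eq, hsq]; linear_combination -this
  rw [hsub, mul_pow, hsq, div_mul_cancel_left₀ (by positivity)]
  ring

lemma one_div_four_mul_sinh_half_sq_le {x : ℝ} (hx : 0 < x) :
    1 / (4 * sinh (x / 2) ^ 2) ≤ 1 / x ^ 2 := by
  have hs : x / 2 < sinh (x / 2) := self_lt_sinh_iff.2 (by positivity)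
  gcongr
  nlinarith

lemma one_div_sq_sub_one_div_four_mul_sinh_half_sq_le_quarter {x : ℝ} (hx : 0 < x) :
    1 / x ^ 2 - 1 / (4 * sinh (x / 2) ^ 2) ≤ 1 / 4 := by
  set y := x / 2
  have hy : 0 < y := by positivity
  have hs : 0 < sinh y := sinh_pos_iff.2 hy
  -- `tanh y ≤ y` gives `sinh² y ≤ y² cosh² y = y² (1 + sinh² y)`
  have key : sinh y ^ 2 ≤ y ^ 2 * (1 + sinh y ^ 2) := by
    rw [← cosh_sq', ← mul_pow]
    exact pow_le_pow_left₀ hs.le (sinh_le_mul_cosh hy.le) 2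
  rw [show x = 2 * y by ring, div_sub_div _ _ (by positivity) (by positivity),
    div_le_div_iff₀ (by positivity) (by norm_num)]
  nlinarith

lemma sub_div_one_add_sq_le_arctan_sub_arctan {a b : ℝ} (ha : 0 ≤ a) (hab : a ≤ b) :
    (b - a) / (1 + b ^ 2) ≤ arctan b - arctan a := by
  rw [div_eq_inv_mul, ← one_div]
  refine (convex_Icc a b).mul_sub_le_image_sub_of_le_deriv continuous_arctan.continuousOn
    differentiable_arctan.differentiableOn (fun x hx ↦ ?_) a (Set.left_mem_Icc.2 hab)
    b (Set.right_mem_Icc.2 hab) hab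
  rw [interior_Icc] at hx
  rw [Real.deriv_arctan]
  exact one_div_le_one_div_of_le (by positivity) (by nlinarith [hx.1, hx.2])

lemma sum_range_one_div_one_add_succ_mul_sq_le {r : ℝ} (hr : 0 < r) (n : ℕ) :
    ∑ j ∈ range n, 1 / (1 + ((j + 1) * r) ^ 2) ≤ π / 2 / r := by
  calc ∑ j ∈ range n, 1 / (1 + ((j + 1) * r) ^ 2)
      ≤ ∑ j ∈ range n, (arctan ((j + 1 : ℕ) * r) - arctan (j * r)) / r := by
        refine sum_le_sum fun j _ ↦ ?_
        have h := sub_div_one_add_sq_le_arctan_sub_arctan (by positivity)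
          (by nlinarith : (j : ℝ) * r ≤ (j + 1) * r)
        rw [le_div_iff₀ hr, one_div_mul_eq_div, Nat.cast_succ]
        rwa [show ((j : ℝ) + 1) * r - j * r = r by ring] at h
    _ = arctan (n * r) / r := by
        rw [← sum_div, sum_range_sub (fun j : ℕ ↦ arctan (j * r))]
        simp
    _ ≤ π / 2 / r := by
        gcongr
        exact (arctan_lt_pi_div_two _).le

lemma hasSum_one_div_succ_sq : HasSum (fun n : ℕ ↦ 1 / ((n : ℝ) + 1) ^ 2) (π ^ 2 / 6) := by
  simpa using (hasSum_nat_add_iff' 1).2 hasSum_zeta_two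

lemma hasSum_neg_one_pow_div_succ_sq :
    HasSum (fun n : ℕ ↦ (-1) ^ n / ((n : ℝ) + 1) ^ 2) (π ^ 2 / 12) := by
  set a : ℕ → ℝ := fun n ↦ 1 / ((n : ℝ) + 1) ^ 2
  have hodd : HasSum (fun k ↦ a (2 * k + 1)) (π ^ 2 / 24) := by
    have h := hasSum_one_div_succ_sq.mul_left (1 / 4)
    rw [show 1 / 4 * (π ^ 2 / 6) = π ^ 2 / 24 by ring] at h
    refine h.congr_fun fun k ↦ ?_
    simp only [a]; push_cast; field_simp; ring
  obtain ⟨e, heven⟩ : Summable (fun k ↦ a (2 * k)) :=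
    hasSum_one_div_succ_sq.summable.comp_injective (mul_right_injective₀ two_ne_zero)
  have he : e = π ^ 2 / 8 := by
    have := (heven.even_add_odd hodd).unique hasSum_one_div_succ_sq
    linarith
  convert HasSum.even_add_odd (f := fun n : ℕ ↦ (-1) ^ n / ((n : ℝ) + 1) ^ 2)
    (by simpa [pow_mul, a] using heven)
    (by simpa [pow_succ, pow_mul, a, neg_div] using hodd.neg) using 1
  rw [he]; ring

lemma hasSum_neg_one_pow_mul_one_div_succ_mul_sq {r : ℝ} (hr : r ≠ 0) :
    HasSum (fun j : ℕ ↦ (-1) ^ j * (1 / ((j + 1) * r) ^ 2)) (π ^ 2 / (12 * r ^ 2)) := by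
  have h := hasSum_neg_one_pow_div_succ_sq.mul_left (1 / r ^ 2)
  rw [show 1 / r ^ 2 * (π ^ 2 / 12) = π ^ 2 / (12 * r ^ 2) by ring] at h
  exact h.congr_fun fun j ↦ by field_simp

lemma abs_one_div_four_mul_sinh_half_sq_sub_one_div_sq_le {x : ℝ} (hx : 0 < x) :
    |1 / (4 * sinh (x / 2) ^ 2) - 1 / x ^ 2| ≤ 5 / 4 * (1 / (1 + x ^ 2)) := by
  rw [abs_sub_comm, abs_of_nonneg (sub_nonneg.2 (one_div_four_mul_sinh_half_sq_le hx))]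
  rcases le_total x 2 with hx2 | hx2
  · calc _ ≤ 1 / 4 := one_div_sq_sub_one_div_four_mul_sinh_half_sq_le_quarter hx
      _ ≤ 5 / 4 * (1 / (1 + x ^ 2)) := by
        rw [mul_one_div, div_le_div_iff₀ (by norm_num) (by positivity)]; nlinarith
  · have : 0 ≤ 1 / (4 * sinh (x / 2) ^ 2) := by positivity
    calc _ ≤ 1 / x ^ 2 := by linarith
      _ ≤ 5 / 4 * (1 / (1 + x ^ 2)) := by
        rw [mul_one_div, div_le_div_iff₀ (by positivity) (by positivity)]; nlinarith

lemma norm_tsum_sub_le_of_hasSum {ι E : Type*} [NormedAddCommGroup E] [CompleteSpace E]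
    {f g : ι → E} {h : ι → ℝ} {b : E} (hg : HasSum g b) (hh : Summable h)
    (hfg : ∀ i, ‖f i - g i‖ ≤ h i) : ‖∑' i, f i - b‖ ≤ ∑' i, h i := by
  have hf : Summable f := by simpa using (Summable.of_norm_bounded hh hfg).add hg.summable
  rw [← hg.tsum_eq, ← hf.tsum_sub hg.summable]
  exact tsum_of_norm_bounded hh.hasSum hfg

/-- Mean asymptotics for partitions into distinct parts: with
`m(t) = ∑_{k≥1} k tᵏ/(1+tᵏ)`, one has `m(e^{−r}) = π²/(12r²) + O(1/r)` as `r → 0⁺`.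
(The `k = 0` term of the sum vanishes.) -/
theorem mean_distinct_partitions_asymptotic :
    ∃ C > (0 : ℝ), ∃ r₀ > (0 : ℝ), ∀ r ∈ Set.Ioo (0 : ℝ) r₀,
      |(∑' k : ℕ, (k : ℝ) * Real.exp (-r) ^ k / (1 + Real.exp (-r) ^ k)) -
          π ^ 2 / (12 * r ^ 2)| ≤ C / r := by
  refine ⟨2, two_pos, 1, one_pos, fun r ⟨hr, _⟩ ↦ ?_⟩
  have ht : ‖exp (-r)‖ < 1 := by
    rw [norm_of_nonneg (exp_pos _).le, exp_lt_one_iff]; linarith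
  have hpow (j : ℕ) : exp (-r) ^ (j + 1) = exp (-((j + 1) * r)) := by
    rw [← exp_nat_mul]; push_cast; ring_nf
  have herr (j : ℕ) : ‖(-1) ^ j * (1 / (4 * sinh ((j + 1) * r / 2) ^ 2))
      - (-1) ^ j * (1 / ((j + 1) * r) ^ 2)‖ ≤ 5 / 4 * (1 / (1 + ((j + 1) * r) ^ 2)) := by
    rw [← mul_sub, norm_mul, norm_pow, norm_neg, norm_one, one_pow, one_mul, norm_eq_abs]
    exact abs_one_div_four_mul_sinh_half_sq_sub_one_div_sq_le (by positivity)
  have hsum (n : ℕ) := sum_range_one_div_one_add_succ_mul_sq_le hr n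
  rw [← norm_eq_abs, tsum_coe_mul_pow_div_one_add_pow ht]
  simp_rw [hpow, exp_neg_div_one_sub_exp_neg_sq]
  calc _ ≤ ∑' j : ℕ, 5 / 4 * (1 / (1 + ((j + 1) * r) ^ 2)) :=
        norm_tsum_sub_le_of_hasSum (hasSum_neg_one_pow_mul_one_div_succ_mul_sq hr.ne')
          ((summable_of_sum_range_le (fun _ ↦ by positivity) hsum).mul_left _) herr
    _ ≤ 5 / 4 * (π / 2 / r) := by
        rw [tsum_mul_left]
        gcongr
        exact tsum_le_of_sum_range_le (fun _ ↦ by positivity) hsum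
    _ ≤ 2 / r := by
        rw [show 5 / 4 * (π / 2 / r) = 5 * π / 8 / r by ring]
        gcongr
        linarith [pi_lt_d2]
end

section
/- Let σ²(t) = ∑_{k=1}^{∞} k² tᵏ/(1+tᵏ)² for t ∈ (0,1). Then σ²(e^{−r}) ∼ π²/(6 r³) as r → 0⁺, i.e. the ratio of the two sides tends to 1. -/
/-!
Let `S(t) = ∑ₖ k² tᵏ / (1 - tᵏ)²` be the analogous variance for unrestricted partitions. The
identity `y / (1 + y)² = y / (1 - y)² - 4 y² / (1 - y²)²` gives `σ²(t) = S(t) - 4 S(t²)`, so it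
suffices to show `r³ S(e^{-r}) → π²/3`. Expanding `y / (1 - y)²` as a power series and summing
over `k` first turns `r³ S(e^{-r})` into the Lambert series `∑ₘ ψ(m r) / m²` with
`ψ(u) = u³ ∑ₖ k² e^{-ku}`. Since `ψ(u) → 2` as `u → 0⁺` and `ψ` is bounded, dominated convergence
gives the limit `2 ζ(2) = π²/3`, and then `r³ σ²(e^{-r}) → π²/3 - 4 · π²/24 = π²/6`.
-/

open Filter Topology Real

theorem hasSum_sq_mul_geometric_of_norm_lt_one {𝕜 : Type*} [NormedField 𝕜] [CompleteSpace 𝕜]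
    {x : 𝕜} (hx : ‖x‖ < 1) :
    HasSum (fun n : ℕ => (n : 𝕜) ^ 2 * x ^ n) (x * (1 + x) / (1 - x) ^ 3) := by
  have hne : 1 - x ≠ 0 := by
    intro h
    rw [sub_eq_zero] at h
    simp [← h] at hx
  -- `n² = 2·C(n+2, 2) - 3·C(n+1, 1) + C(n, 0)`
  have h := (((hasSum_choose_mul_geometric_of_norm_lt_one 2 hx).mul_left 2).sub
    ((hasSum_choose_mul_geometric_of_norm_lt_one 1 hx).mul_left 3)).add
    (hasSum_choose_mul_geometric_of_norm_lt_one 0 hx)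
  have hsum : 2 * (1 / (1 - x) ^ (2 + 1)) - 3 * (1 / (1 - x) ^ (1 + 1)) + 1 / (1 - x) ^ (0 + 1) =
      x * (1 + x) / (1 - x) ^ 3 := by
    field_simp
    ring
  rw [hsum] at h
  refine h.congr_fun fun n => ?_
  have hchoose : ((n + 2).choose 2 : 𝕜) * 2 = (n + 2) * (n + 1) := by
    norm_cast
    rw [← Nat.add_one_mul_choose_eq, Nat.choose_one_right]
  simp only [Nat.choose_one_right, Nat.choose_zero_right]
  push_cast
  linear_combination (-x ^ n) * hchoose

theorem tendsto_const_mul_nhdsGT_zero {𝕜 : Type*} [Field 𝕜] [LinearOrder 𝕜]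
    [IsStrictOrderedRing 𝕜] [TopologicalSpace 𝕜] [OrderTopology 𝕜] {c : 𝕜} (hc : 0 < c) :
    Tendsto (c * ·) (𝓝[>] 0) (𝓝[>] 0) :=
  tendsto_iff_comap.2 (comap_mulLeft_nhdsGT_zero hc).ge

/-- The variance at `t` of the probability measure attached to `∏ₖ (1 - zᵏ)⁻¹`, the generating
function of all partitions. -/
noncomputable def partitionVariance (t : ℝ) : ℝ :=
  ∑' k : ℕ, (k : ℝ) ^ 2 * t ^ k / (1 - t ^ k) ^ 2

section Lambert

variable {t : ℝ}

theorem norm_pow_lt_one_of_nonneg (h0 : 0 ≤ t) (h1 : t < 1) {k : ℕ} (hk : k ≠ 0) :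
    ‖t ^ k‖ < 1 := by
  rw [norm_pow, norm_of_nonneg h0]
  exact pow_lt_one₀ h0 h1 hk

theorem summable_partitionVariance (h0 : 0 ≤ t) (h1 : t < 1) :
    Summable fun k : ℕ => (k : ℝ) ^ 2 * t ^ k / (1 - t ^ k) ^ 2 := by
  have ht : ‖t‖ < 1 := by rwa [norm_of_nonneg h0]
  simp only [div_eq_mul_one_div ((_ : ℝ) * _)]
  refine (summable_norm_pow_mul_geometric_of_norm_lt_one 2 ht).mul_tendsto_const
    (c := 1 / (1 - 0) ^ 2) ?_
  rw [Nat.cofinite_eq_atTop]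
  exact tendsto_const_nhds.div (((tendsto_pow_atTop_nhds_zero_of_lt_one h0 h1).const_sub 1).pow 2)
    (by norm_num)

theorem hasSum_partitionVariance_row (h0 : 0 ≤ t) (h1 : t < 1) (k : ℕ) :
    HasSum (fun m : ℕ => (k : ℝ) ^ 2 * (m * (t ^ k) ^ m))
      ((k : ℝ) ^ 2 * t ^ k / (1 - t ^ k) ^ 2) := by
  rcases eq_or_ne k 0 with rfl | hk
  · simp only [CharP.cast_eq_zero, zero_pow two_ne_zero, zero_mul, zero_div]
    exact hasSum_zero
  rw [mul_div_assoc]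
  exact (hasSum_coe_mul_geometric_of_norm_lt_one (norm_pow_lt_one_of_nonneg h0 h1 hk)).mul_left _

theorem hasSum_partitionVariance_column (h0 : 0 ≤ t) (h1 : t < 1) (m : ℕ) :
    HasSum (fun k : ℕ => (k : ℝ) ^ 2 * (m * (t ^ k) ^ m))
      ((m : ℝ) * (t ^ m * (1 + t ^ m) / (1 - t ^ m) ^ 3)) := by
  rcases eq_or_ne m 0 with rfl | hm
  · simp only [CharP.cast_eq_zero, zero_mul, mul_zero]
    exact hasSum_zero
  refine ((hasSum_sq_mul_geometric_of_norm_lt_one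
    (norm_pow_lt_one_of_nonneg h0 h1 hm)).mul_left (m : ℝ)).congr_fun fun k => ?_
  rw [← pow_mul, mul_comm k, pow_mul]
  ring

theorem hasSum_partitionVariance (h0 : 0 ≤ t) (h1 : t < 1) :
    HasSum (fun m : ℕ => (m : ℝ) * (t ^ m * (1 + t ^ m) / (1 - t ^ m) ^ 3))
      (partitionVariance t) := by
  set F : ℕ × ℕ → ℝ := fun p => (p.1 : ℝ) ^ 2 * (p.2 * (t ^ p.1) ^ p.2)
  have hF : Summable F := by
    refine (summable_prod_of_nonneg fun p => by positivity).2
      ⟨fun k => (hasSum_partitionVariance_row h0 h1 k).summable, ?_⟩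
    simpa only [F, (hasSum_partitionVariance_row h0 h1 _).tsum_eq]
      using summable_partitionVariance h0 h1
  have hrows := hF.hasSum.prod_fiberwise (hasSum_partitionVariance_row h0 h1)
  have hcols := ((Equiv.prodComm ℕ ℕ).hasSum_iff.2 hF.hasSum).prod_fiberwise
    (hasSum_partitionVariance_column h0 h1)
  rw [partitionVariance, hrows.tsum_eq]
  exact hcols

theorem div_one_add_sq_eq {y : ℝ} (h1 : 1 - y ≠ 0) (h2 : 1 + y ≠ 0) :
    y / (1 + y) ^ 2 = y / (1 - y) ^ 2 - 4 * (y ^ 2 / (1 - y ^ 2) ^ 2) := by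
  have h3 : 1 - y ^ 2 ≠ 0 := by
    rw [show 1 - y ^ 2 = (1 - y) * (1 + y) by ring]
    exact mul_ne_zero h1 h2
  field_simp
  ring

theorem tsum_sq_mul_div_one_add_sq (h0 : 0 ≤ t) (h1 : t < 1) :
    ∑' k : ℕ, (k : ℝ) ^ 2 * t ^ k / (1 + t ^ k) ^ 2 =
      partitionVariance t - 4 * partitionVariance (t ^ 2) := by
  have h0' : 0 ≤ t ^ 2 := sq_nonneg t
  have h1' : t ^ 2 < 1 := by nlinarith
  rw [partitionVariance, partitionVariance, ← tsum_mul_left,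
    ← (summable_partitionVariance h0 h1).tsum_sub ((summable_partitionVariance h0' h1').mul_left 4)]
  refine tsum_congr fun k => ?_
  rcases eq_or_ne k 0 with rfl | hk
  · simp
  have htk : t ^ k < 1 := pow_lt_one₀ h0 h1 hk
  rw [← pow_mul, mul_comm 2 k, pow_mul, mul_div_assoc, mul_div_assoc, mul_div_assoc,
    div_one_add_sq_eq (by linarith) (by positivity)]
  ring

end Lambert

section LambertKernel

variable {u : ℝ}

theorem one_le_div_one_sub_exp_neg (hu : 0 < u) : 1 ≤ u / (1 - exp (-u)) := by
  have hpos : 0 < 1 - exp (-u) := by simpa using hu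
  rw [one_le_div hpos]
  linarith [add_one_le_exp (-u)]

theorem div_one_sub_exp_neg_le (hu : 0 < u) : u / (1 - exp (-u)) ≤ 1 + u := by
  have hpos : 0 < 1 - exp (-u) := by simpa using hu
  rw [div_le_iff₀ hpos]
  have h := mul_le_mul_of_nonneg_right (add_one_le_exp u) (exp_pos (-u)).le
  rw [← exp_add, add_neg_cancel, exp_zero] at h
  nlinarith

theorem tendsto_div_one_sub_exp_neg :
    Tendsto (fun u => u / (1 - exp (-u))) (𝓝[>] 0) (𝓝 1) := by
  have hup : Tendsto (fun u : ℝ => 1 + u) (𝓝[>] 0) (𝓝 1) := by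
    simpa using (tendsto_const_nhds.add tendsto_id).mono_left (nhdsWithin_le_nhds (a := (0 : ℝ)))
  refine tendsto_of_tendsto_of_tendsto_of_le_of_le' tendsto_const_nhds hup ?_ ?_ <;>
    filter_upwards [self_mem_nhdsWithin] with u hu
  exacts [one_le_div_one_sub_exp_neg hu, div_one_sub_exp_neg_le hu]

/-- `u³ ∑ₖ k² e^{-ku}`, the function `ψ` of the Lambert series `∑ₘ ψ(m r) / m²`
for `r³ · partitionVariance (e^{-r})`. -/
noncomputable def lambertKernel (u : ℝ) : ℝ :=
  (u / (1 - exp (-u))) ^ 3 * (exp (-u) * (1 + exp (-u)))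

theorem tendsto_lambertKernel : Tendsto lambertKernel (𝓝[>] 0) (𝓝 2) := by
  have hexp : Tendsto (fun u : ℝ => exp (-u)) (𝓝[>] 0) (𝓝 1) := by
    simpa [Function.comp_def] using
      ((continuous_exp.comp continuous_neg).tendsto 0).mono_left (nhdsWithin_le_nhds (s := Set.Ioi 0))
  have h := (tendsto_div_one_sub_exp_neg.pow 3).mul
    (hexp.mul ((tendsto_const_nhds (x := (1 : ℝ))).add hexp))
  norm_num at h
  exact h

theorem lambertKernel_nonneg (hu : 0 ≤ u) : 0 ≤ lambertKernel u := by
  have : 0 ≤ 1 - exp (-u) := by simpa using hu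
  unfold lambertKernel
  positivity

theorem one_add_pow_three_mul_exp_neg_le (hu : 0 ≤ u) : (1 + u) ^ 3 * exp (-u) ≤ 6 * exp 1 := by
  have h := pow_div_factorial_le_exp (x := 1 + u) (by linarith) 3
  rw [div_le_iff₀ (by positivity), exp_add] at h
  calc (1 + u) ^ 3 * exp (-u) ≤ exp 1 * exp u * (Nat.factorial 3) * exp (-u) := by gcongr
    _ = 6 * exp 1 := by
      rw [mul_right_comm, mul_assoc (exp 1), ← exp_add, add_neg_cancel, exp_zero]
      norm_num [Nat.factorial]
      ring

theorem lambertKernel_le (hu : 0 < u) : lambertKernel u ≤ 12 * exp 1 := by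
  have hexp : exp (-u) ≤ 1 := by simpa using hu.le
  calc lambertKernel u ≤ (1 + u) ^ 3 * (exp (-u) * (1 + 1)) := by
        unfold lambertKernel
        have := one_le_div_one_sub_exp_neg hu
        gcongr
        exact div_one_sub_exp_neg_le hu
    _ = 2 * ((1 + u) ^ 3 * exp (-u)) := by ring
    _ ≤ 12 * exp 1 := by linarith [one_add_pow_three_mul_exp_neg_le hu.le]

end LambertKernel

-- Both sides vanish when `m = 0` or `e^{-mr} = 1`, by the conventions for division by zero.
theorem cube_mul_lambert_term_eq (r : ℝ) (m : ℕ) :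
    r ^ 3 * ((m : ℝ) * (exp (-r) ^ m * (1 + exp (-r) ^ m) / (1 - exp (-r) ^ m) ^ 3)) =
      lambertKernel (m * r) / (m : ℝ) ^ 2 := by
  rw [← exp_nat_mul, mul_neg, lambertKernel]
  rcases eq_or_ne (m : ℝ) 0 with hm | hm
  · simp [hm]
  rcases eq_or_ne (1 - exp (-(m * r))) 0 with hd | hd
  · simp [hd]
  field_simp

theorem tendsto_cube_mul_partitionVariance :
    Tendsto (fun r => r ^ 3 * partitionVariance (exp (-r))) (𝓝[>] 0) (𝓝 (π ^ 2 / 3)) := by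
  have hlim (m : ℕ) : Tendsto (fun r => lambertKernel (m * r) / (m : ℝ) ^ 2) (𝓝[>] 0)
      (𝓝 (2 / (m : ℝ) ^ 2)) := by
    rcases eq_or_ne m 0 with rfl | hm
    · simp
    exact (tendsto_lambertKernel.comp
      (tendsto_const_mul_nhdsGT_zero (Nat.cast_pos.2 (Nat.pos_of_ne_zero hm)))).div_const _
  have hbound : ∀ᶠ r in 𝓝[>] 0, ∀ m : ℕ,
      ‖lambertKernel (m * r) / (m : ℝ) ^ 2‖ ≤ 12 * exp 1 * (1 / (m : ℝ) ^ 2) := by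
    filter_upwards [self_mem_nhdsWithin] with r (hr : 0 < r) m
    rcases eq_or_ne m 0 with rfl | hm
    · simp
    have hmr : 0 < (m : ℝ) * r := mul_pos (Nat.cast_pos.2 (Nat.pos_of_ne_zero hm)) hr
    rw [norm_of_nonneg (div_nonneg (lambertKernel_nonneg hmr.le) (sq_nonneg _)), mul_one_div]
    gcongr
    exact lambertKernel_le hmr
  have h := tendsto_tsum_of_dominated_convergence (hasSum_zeta_two.summable.mul_left _) hlim hbound
  simp only [div_eq_mul_one_div (2 : ℝ), (hasSum_zeta_two.mul_left 2).tsum_eq] at h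
  rw [show 2 * (π ^ 2 / 6) = π ^ 2 / 3 by ring] at h
  refine h.congr' ?_
  filter_upwards [self_mem_nhdsWithin] with r (hr : 0 < r)
  have hexp : exp (-r) < 1 := by simpa using hr
  rw [← (hasSum_partitionVariance (exp_pos _).le hexp).tsum_eq, ← tsum_mul_left]
  simp only [cube_mul_lambert_term_eq]

/-- Variance asymptotics for partitions into distinct parts: with
`σ²(t) = ∑_{k≥1} k² tᵏ/(1+tᵏ)²`, one has `σ²(e^{−r}) ∼ π²/(6r³)` as `r → 0⁺`.
(The `k = 0` term of the sum vanishes.) -/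
theorem variance_distinct_partitions_asymptotic :
    Tendsto
      (fun r : ℝ =>
        (∑' k : ℕ, (k : ℝ) ^ 2 * Real.exp (-r) ^ k / (1 + Real.exp (-r) ^ k) ^ 2) /
          (π ^ 2 / (6 * r ^ 3)))
      (𝓝[>] (0 : ℝ)) (𝓝 1) := by
  have hS := tendsto_cube_mul_partitionVariance
  -- `r³ S(e^{-2r}) = (2r)³ S(e^{-2r}) / 8`
  have hS₂ : Tendsto (fun r => r ^ 3 * partitionVariance (exp (-r) ^ 2)) (𝓝[>] 0)
      (𝓝 (π ^ 2 / 24)) := by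
    have h := (hS.comp (tendsto_const_mul_nhdsGT_zero two_pos)).div_const 8
    rw [show π ^ 2 / 3 / 8 = π ^ 2 / 24 by ring] at h
    refine h.congr fun r => ?_
    rw [Function.comp_apply, ← exp_nat_mul]
    push_cast
    ring_nf
  have h := (hS.sub (hS₂.const_mul 4)).const_mul (6 / π ^ 2)
  rw [show 6 / π ^ 2 * (π ^ 2 / 3 - 4 * (π ^ 2 / 24)) = 1 by field_simp; ring] at h
  refine h.congr' ?_
  filter_upwards [self_mem_nhdsWithin] with r (hr : 0 < r)
  rw [tsum_sq_mul_div_one_add_sq (exp_pos _).le (by simpa using hr)]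
  field_simp
end

section
/- Let Γ₃(t) = ∑_{k=1}^{∞} k³ (t^{3k}+tᵏ)/(1+tᵏ)⁴ and σ²(t) = ∑_{k=1}^{∞} k² tᵏ/(1+tᵏ)² for t ∈ (0,1). Then Γ₃(e^{−r}) ∼ C/r⁴ as r → 0⁺, where C = ∫₀^{∞} x³(e^{−3x}+e^{−x})/(1+e^{−x})⁴ dx; consequently Γ₃(t)/σ(t)³ → 0 as t → 1⁻. -/
/-!
Put `t = e^{-r}` and `F x = xⁿ ψ(e^{-x})`. Then `r^{n+1} ∑ₖ kⁿ ψ(tᵏ) = ∑ₖ r F(rk)` is a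
Riemann sum of mesh `r` for `∫₀^∞ F`: up to the term `r F(0)`, it is the integral of the step
function `x ↦ F(r⌈x/r⌉)`, which tends to `F` pointwise as `r → 0⁺`. When `|ψ u| ≤ C u` on
`(0, 1)`, the bound `xⁿ e^{-x} ≤ 2ⁿ n! e^{-x/2}` gives an antitone integrable majorant, so
dominated convergence applies. With `n = 3` and `n = 2` this yields `Γ₃(e^{-r}) ∼ a/r⁴` and
`σ²(e^{-r}) ∼ b/r³` with `b > 0`, hence `Γ₃/σ³ ~ (a/b^{3/2}) √r → 0`.
-/

open Filter Topology Real MeasureTheory Set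
open scoped Nat

lemma mul_ceil_div_mem_Ico {r : ℝ} (hr : 0 < r) (x : ℝ) : r * ⌈x / r⌉ ∈ Ico x (x + r) := by
  have hle := Int.le_ceil (x / r)
  have hlt := Int.ceil_lt_add_one (x / r)
  rw [div_le_iff₀ hr] at hle
  rw [← sub_lt_iff_lt_add, lt_div_iff₀ hr] at hlt
  constructor <;> linarith

lemma ceil_div_eq_of_mem_Ioc {r x : ℝ} (hr : 0 < r) {k : ℕ} (hx : x ∈ Ioc (r * k) (r * (k + 1))) :
    (⌈x / r⌉ : ℝ) = k + 1 := by
  have : ⌈x / r⌉ = (k : ℤ) + 1 := by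
    rw [Int.ceil_eq_iff, lt_div_iff₀ hr, div_le_iff₀ hr]
    push_cast
    constructor <;> linarith [hx.1, hx.2]
  exact_mod_cast this

lemma iUnion_Ioc_mul_natCast {r : ℝ} (hr : 0 < r) :
    ⋃ k : ℕ, Ioc (r * k) (r * (k + 1)) = Ioi 0 := by
  have hunbdd : ¬BddAbove (range fun k : ℕ => r * k) := by
    rw [not_bddAbove_iff]
    intro x
    obtain ⟨k, hk⟩ := exists_nat_gt (x / r)
    exact ⟨r * k, mem_range_self k, by rwa [div_lt_iff₀ hr, mul_comm] at hk⟩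
  simpa using iUnion_Ioc_map_succ_eq_Ioi (f := fun k : ℕ => r * k)
    (fun k => by simp only [Nat.bot_eq_zero, CharP.cast_eq_zero, mul_zero]; positivity) hunbdd

section RiemannSum

variable {F g : ℝ → ℝ}

lemma hasSum_integral_comp_mul_ceil_div {r : ℝ} (hr : 0 < r)
    (hint : IntegrableOn (fun x => F (r * ⌈x / r⌉)) (Ioi 0)) :
    HasSum (fun k : ℕ => r * F (r * (k + 1))) (∫ x in Ioi 0, F (r * ⌈x / r⌉)) := by
  have hmono : Monotone fun k : ℕ => r * k := fun i j h => by
    simp only; gcongr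
  have hpiece : ∀ k : ℕ,
      ∫ x in Ioc (r * k) (r * (k + 1)), F (r * ⌈x / r⌉) = r * F (r * (k + 1)) := by
    intro k
    rw [setIntegral_congr_fun measurableSet_Ioc fun x hx => by rw [ceil_div_eq_of_mem_Ioc hr hx],
      setIntegral_const, Real.volume_real_Ioc_of_le (by gcongr; linarith), smul_eq_mul]
    ring
  rw [← iUnion_Ioc_mul_natCast hr] at hint ⊢
  simpa only [hpiece] using hasSum_integral_iUnion (fun _ => measurableSet_Ioc)
    (by simpa using hmono.pairwise_disjoint_on_Ioc_succ) hint

lemma tendsto_mul_ceil_div (x : ℝ) :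
    Tendsto (fun r : ℝ => r * (⌈x / r⌉ : ℝ)) (𝓝[>] 0) (𝓝 x) := by
  have hupper : Tendsto (fun r : ℝ => x + r) (𝓝[>] 0) (𝓝 x) := by
    simpa using (tendsto_const_nhds.add tendsto_id).mono_left (nhdsWithin_le_nhds (a := (0 : ℝ)))
  refine tendsto_of_tendsto_of_tendsto_of_le_of_le' tendsto_const_nhds hupper ?_ ?_ <;>
    filter_upwards [self_mem_nhdsWithin] with r hr
  exacts [(mul_ceil_div_mem_Ico hr x).1, (mul_ceil_div_mem_Ico hr x).2.le]

lemma measurable_comp_mul_ceil_div (hF : Continuous F) (r : ℝ) :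
    Measurable fun x : ℝ => F (r * ⌈x / r⌉) := by
  fun_prop

lemma abs_comp_mul_ceil_div_le (hg : AntitoneOn g (Ioi 0)) (hFg : ∀ x > 0, |F x| ≤ g x)
    {r x : ℝ} (hr : 0 < r) (hx : 0 < x) : |F (r * ⌈x / r⌉)| ≤ g x := by
  have hle := (mul_ceil_div_mem_Ico hr x).1
  exact (hFg _ (hx.trans_le hle)).trans (hg hx (hx.trans_le hle) hle)

lemma integrableOn_comp_mul_ceil_div (hF : Continuous F) (hg : AntitoneOn g (Ioi 0))
    (hgi : IntegrableOn g (Ioi 0)) (hFg : ∀ x > 0, |F x| ≤ g x) {r : ℝ} (hr : 0 < r) :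
    IntegrableOn (fun x => F (r * ⌈x / r⌉)) (Ioi 0) :=
  hgi.mono' (measurable_comp_mul_ceil_div hF r).aestronglyMeasurable <|
    (ae_restrict_mem measurableSet_Ioi).mono fun _ hx => abs_comp_mul_ceil_div_le hg hFg hr hx

lemma tendsto_integral_comp_mul_ceil_div (hF : Continuous F) (hg : AntitoneOn g (Ioi 0))
    (hgi : IntegrableOn g (Ioi 0)) (hFg : ∀ x > 0, |F x| ≤ g x) :
    Tendsto (fun r => ∫ x in Ioi 0, F (r * ⌈x / r⌉)) (𝓝[>] 0) (𝓝 (∫ x in Ioi 0, F x)) := by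
  refine tendsto_integral_filter_of_dominated_convergence g
    (.of_forall fun r => (measurable_comp_mul_ceil_div hF r).aestronglyMeasurable) ?_ hgi
    (.of_forall fun x => (hF.tendsto x).comp (tendsto_mul_ceil_div x))
  filter_upwards [self_mem_nhdsWithin] with r hr
  filter_upwards [ae_restrict_mem measurableSet_Ioi] with x hx
  exact abs_comp_mul_ceil_div_le hg hFg hr hx

theorem tendsto_tsum_mul_comp_mul_integral_Ioi (hF : Continuous F) (hg : AntitoneOn g (Ioi 0))
    (hgi : IntegrableOn g (Ioi 0)) (hFg : ∀ x > 0, |F x| ≤ g x) :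
    Tendsto (fun r => ∑' k : ℕ, r * F (r * k)) (𝓝[>] 0) (𝓝 (∫ x in Ioi 0, F x)) := by
  have hF0 : Tendsto (fun r : ℝ => r * F 0) (𝓝[>] 0) (𝓝 0) :=
    ((continuous_id.mul continuous_const).tendsto' 0 0 (zero_mul _)).mono_left nhdsWithin_le_nhds
  have hstep := tendsto_integral_comp_mul_ceil_div hF hg hgi hFg
  rw [← zero_add (∫ x in Ioi 0, F x)]
  refine (hF0.add hstep).congr' ?_
  filter_upwards [self_mem_nhdsWithin] with r hr
  have hsum : HasSum (fun k : ℕ => r * F (r * k))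
      (r * F (r * (0 : ℕ)) + ∫ x in Ioi 0, F (r * ⌈x / r⌉)) :=
    HasSum.zero_add (f := fun k : ℕ => r * F (r * k)) (by
      simpa only [Nat.cast_add, Nat.cast_one] using hasSum_integral_comp_mul_ceil_div hr
        (integrableOn_comp_mul_ceil_div hF hg hgi hFg hr))
  rw [hsum.tsum_eq, Nat.cast_zero, mul_zero]

end RiemannSum

lemma pow_mul_exp_neg_le (n : ℕ) {x : ℝ} (hx : 0 ≤ x) :
    x ^ n * exp (-x) ≤ 2 ^ n * n ! * exp (-(x / 2)) := by
  have h := Real.pow_div_factorial_le_exp (x / 2) (by positivity) n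
  rw [div_pow, div_div, div_le_iff₀ (by positivity)] at h
  calc x ^ n * exp (-x) ≤ exp (x / 2) * (2 ^ n * n !) * exp (-x) := by gcongr
    _ = 2 ^ n * n ! * exp (-(x / 2)) := by
      rw [mul_comm (exp _), mul_assoc, ← exp_add]; ring_nf

lemma integrableOn_const_mul_exp_neg_half (M : ℝ) :
    IntegrableOn (fun x => M * exp (-(x / 2))) (Ioi 0) := by
  simpa [IntegrableOn, neg_div, div_eq_inv_mul] using
    (exp_neg_integrableOn_Ioi 0 (by norm_num : (0 : ℝ) < 1 / 2)).const_mul M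

lemma antitone_const_mul_exp_neg_half {M : ℝ} (hM : 0 ≤ M) :
    Antitone (fun x => M * exp (-(x / 2))) := fun a b hab => by
  simp only; gcongr

section ExpScaling

variable {ψ : ℝ → ℝ} {C : ℝ}

lemma abs_pow_mul_comp_exp_neg_le (hψ : ∀ u ∈ Ioo 0 1, |ψ u| ≤ C * u) (n : ℕ) {x : ℝ}
    (hx : 0 < x) : |x ^ n * ψ (exp (-x))| ≤ C * 2 ^ n * n ! * exp (-(x / 2)) := by
  have hu : exp (-x) ∈ Ioo 0 1 := ⟨exp_pos _, exp_lt_one_iff.2 (neg_lt_zero.2 hx)⟩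
  calc |x ^ n * ψ (exp (-x))| ≤ x ^ n * (C * exp (-x)) := by
        rw [abs_mul, abs_of_nonneg (by positivity)]
        exact mul_le_mul_of_nonneg_left (hψ _ hu) (by positivity)
    _ ≤ C * (2 ^ n * n ! * exp (-(x / 2))) := by
        rw [mul_left_comm]
        exact mul_le_mul_of_nonneg_left (pow_mul_exp_neg_le n hx.le)
          (nonneg_of_mul_nonneg_left ((abs_nonneg _).trans (hψ _ hu)) hu.1)
    _ = C * 2 ^ n * n ! * exp (-(x / 2)) := by ring

lemma continuous_pow_mul_comp_exp_neg (hψc : ContinuousOn ψ (Ioi 0)) (n : ℕ) :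
    Continuous fun x => x ^ n * ψ (exp (-x)) :=
  (continuous_pow n).mul (hψc.comp_continuous (by fun_prop) fun _ => exp_pos _)

lemma integrableOn_pow_mul_comp_exp_neg (hψc : ContinuousOn ψ (Ioi 0))
    (hψ : ∀ u ∈ Ioo 0 1, |ψ u| ≤ C * u) (n : ℕ) :
    IntegrableOn (fun x => x ^ n * ψ (exp (-x))) (Ioi 0) :=
  (integrableOn_const_mul_exp_neg_half _).mono'
    (continuous_pow_mul_comp_exp_neg hψc n).aestronglyMeasurable <|
    (ae_restrict_mem measurableSet_Ioi).mono fun _ hx => abs_pow_mul_comp_exp_neg_le hψ n hx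

lemma integral_pow_mul_comp_exp_neg_pos (hψc : ContinuousOn ψ (Ioi 0))
    (hψ : ∀ u ∈ Ioo 0 1, |ψ u| ≤ C * u) (hψpos : ∀ u ∈ Ioo 0 1, 0 < ψ u) (n : ℕ) :
    0 < ∫ x in Ioi 0, x ^ n * ψ (exp (-x)) := by
  have hpos : ∀ x ∈ Ioi (0 : ℝ), 0 < x ^ n * ψ (exp (-x)) := fun x hx =>
    mul_pos (pow_pos hx n) (hψpos _ ⟨exp_pos _, exp_lt_one_iff.2 (neg_lt_zero.2 hx)⟩)
  rw [setIntegral_pos_iff_support_of_nonneg_ae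
    ((ae_restrict_mem measurableSet_Ioi).mono fun x hx => (hpos x hx).le)
    (integrableOn_pow_mul_comp_exp_neg hψc hψ n)]
  rw [inter_eq_right.2 fun x hx => Function.mem_support.2 (hpos x hx).ne', Real.volume_Ioi]
  exact ENNReal.zero_lt_top

theorem tendsto_pow_mul_tsum_pow_mul_comp_exp_neg (hψc : ContinuousOn ψ (Ioi 0))
    (hψ : ∀ u ∈ Ioo 0 1, |ψ u| ≤ C * u) (n : ℕ) :
    Tendsto (fun r => r ^ (n + 1) * ∑' k : ℕ, (k : ℝ) ^ n * ψ (exp (-r) ^ k)) (𝓝[>] 0)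
      (𝓝 (∫ x in Ioi 0, x ^ n * ψ (exp (-x)))) := by
  have hC : 0 ≤ C * 2 ^ n * n ! := by
    have h := hψ 2⁻¹ ⟨by norm_num, by norm_num⟩
    have : 0 ≤ C := by nlinarith [abs_nonneg (ψ 2⁻¹)]
    positivity
  refine (tendsto_tsum_mul_comp_mul_integral_Ioi (continuous_pow_mul_comp_exp_neg hψc n)
    ((antitone_const_mul_exp_neg_half hC).antitoneOn _) (integrableOn_const_mul_exp_neg_half _)
    fun x hx => abs_pow_mul_comp_exp_neg_le hψ n hx).congr' ?_
  filter_upwards [self_mem_nhdsWithin] with r hr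
  rw [← tsum_mul_left]
  refine tsum_congr fun k => ?_
  rw [← exp_nat_mul]
  ring_nf

end ExpScaling

section DistinctParts

/- With `p = u / (1 + u)`, `thirdMomentWeight u = p (1 - p) (p² + (1 - p)²)` and
`varianceWeight u = p (1 - p)` are the third absolute central moment and the variance of a
Bernoulli(`p`) variable; the factor `1 + zᵏ` at parameter `t` contributes `k` times such a
variable with `u = tᵏ`. -/
noncomputable def thirdMomentWeight (u : ℝ) : ℝ := (u ^ 3 + u) / (1 + u) ^ 4

noncomputable def varianceWeight (u : ℝ) : ℝ := u / (1 + u) ^ 2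

lemma continuousOn_thirdMomentWeight : ContinuousOn thirdMomentWeight (Ioi 0) :=
  ContinuousOn.div (by fun_prop) (by fun_prop) fun u (hu : 0 < u) => by positivity

lemma continuousOn_varianceWeight : ContinuousOn varianceWeight (Ioi 0) :=
  ContinuousOn.div (by fun_prop) (by fun_prop) fun u (hu : 0 < u) => by positivity

lemma thirdMomentWeight_pos {u : ℝ} (hu : 0 < u) : 0 < thirdMomentWeight u := by
  unfold thirdMomentWeight; positivity

lemma varianceWeight_pos {u : ℝ} (hu : 0 < u) : 0 < varianceWeight u := by
  unfold varianceWeight; positivity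

lemma abs_thirdMomentWeight_le {u : ℝ} (hu : u ∈ Ioo 0 1) : |thirdMomentWeight u| ≤ 2 * u := by
  obtain ⟨hu0, hu1⟩ := hu
  rw [abs_of_pos (thirdMomentWeight_pos hu0)]
  have hu3 : u ^ 3 ≤ u := pow_le_of_le_one hu0.le hu1.le (by norm_num)
  calc thirdMomentWeight u ≤ u ^ 3 + u := div_le_self (by positivity) (one_le_pow₀ (by linarith))
    _ ≤ 2 * u := by linarith

lemma abs_varianceWeight_le {u : ℝ} (hu : u ∈ Ioo 0 1) : |varianceWeight u| ≤ 1 * u := by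
  rw [abs_of_pos (varianceWeight_pos hu.1), one_mul]
  exact div_le_self hu.1.le (one_le_pow₀ (by linarith [hu.1]))

lemma tsum_thirdMoment_eq (t : ℝ) :
    ∑' k : ℕ, (k : ℝ) ^ 3 * (t ^ (3 * k) + t ^ k) / (1 + t ^ k) ^ 4 =
      ∑' k : ℕ, (k : ℝ) ^ 3 * thirdMomentWeight (t ^ k) :=
  tsum_congr fun k => by rw [thirdMomentWeight, pow_mul']; ring

lemma tsum_variance_eq (t : ℝ) :
    ∑' k : ℕ, (k : ℝ) ^ 2 * t ^ k / (1 + t ^ k) ^ 2 =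
      ∑' k : ℕ, (k : ℝ) ^ 2 * varianceWeight (t ^ k) :=
  tsum_congr fun k => by rw [varianceWeight]; ring

lemma integral_thirdMoment_eq :
    ∫ x in Ioi (0 : ℝ), x ^ 3 * (exp (-3 * x) + exp (-x)) / (1 + exp (-x)) ^ 4 =
      ∫ x in Ioi 0, x ^ 3 * thirdMomentWeight (exp (-x)) := by
  refine integral_congr_ae (.of_forall fun x => ?_)
  have hexp : exp (-3 * x) = exp (-x) ^ 3 := by rw [← exp_nat_mul]; ring_nf
  simp only [thirdMomentWeight, hexp]
  ring

end DistinctParts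

lemma div_sqrt_pow_three_eq {r : ℝ} (hr : 0 < r) (A B : ℝ) :
    A / √B ^ 3 = r ^ 4 * A * √r / √(r ^ 3 * B) ^ 3 := by
  have hsqrt : √(r ^ 3 * B) ^ 3 = r ^ 4 * √r * √B ^ 3 := by
    rw [Real.sqrt_mul (by positivity), show r ^ 3 = r ^ 2 * r by ring,
      Real.sqrt_mul (by positivity), Real.sqrt_sq hr.le]
    have := Real.sq_sqrt hr.le
    linear_combination (r ^ 3 * √r * √B ^ 3) * this
  rw [hsqrt, mul_right_comm (r ^ 4), mul_div_mul_left _ _ (by positivity)]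

lemma tendsto_div_sqrt_pow_three_of_scaling {A B : ℝ → ℝ} {a b : ℝ} (hb : 0 < b)
    (hA : Tendsto (fun r => r ^ 4 * A r) (𝓝[>] 0) (𝓝 a))
    (hB : Tendsto (fun r => r ^ 3 * B r) (𝓝[>] 0) (𝓝 b)) :
    Tendsto (fun r => A r / √(B r) ^ 3) (𝓝[>] 0) (𝓝 0) := by
  have hsqrt : Tendsto (fun r : ℝ => √r) (𝓝[>] 0) (𝓝 0) := by
    simpa using (Real.continuous_sqrt.tendsto 0).mono_left nhdsWithin_le_nhds
  have hlim := (hA.mul hsqrt).div ((Real.continuous_sqrt.tendsto b).comp hB |>.pow 3)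
    (by positivity)
  rw [mul_zero, zero_div] at hlim
  refine hlim.congr' ?_
  filter_upwards [self_mem_nhdsWithin] with r hr
  exact (div_sqrt_pow_three_eq hr _ _).symm

lemma tendsto_neg_log_nhdsLT_one : Tendsto (fun t => -log t) (𝓝[<] 1) (𝓝[>] 0) := by
  refine tendsto_nhdsWithin_iff.2 ⟨?_, ?_⟩
  · have h := (continuousAt_log one_ne_zero).neg.tendsto.mono_left (nhdsWithin_le_nhds (s := Iio 1))
    rwa [Pi.neg_apply, log_one, neg_zero] at h
  · filter_upwards [Ioo_mem_nhdsLT (zero_lt_one' ℝ)] with t ht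
    exact neg_pos.2 (log_neg ht.1 ht.2)

/-- Third-moment asymptotics for partitions into distinct parts: with
`Γ₃(t) = ∑_{k≥1} k³(t^{3k}+tᵏ)/(1+tᵏ)⁴` and `σ²(t) = ∑_{k≥1} k² tᵏ/(1+tᵏ)²`,
one has `Γ₃(e^{−r}) ∼ C/r⁴` as `r → 0⁺` with
`C = ∫₀^∞ x³(e^{−3x}+e^{−x})/(1+e^{−x})⁴ dx`, and consequently
`Γ₃(t)/σ(t)³ → 0` as `t → 1⁻`. (The `k = 0` terms of both sums vanish.) -/
theorem third_moment_distinct_partitions_asymptotic :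
    Tendsto
      (fun r : ℝ =>
        (∑' k : ℕ, (k : ℝ) ^ 3 * (Real.exp (-r) ^ (3 * k) + Real.exp (-r) ^ k) /
            (1 + Real.exp (-r) ^ k) ^ 4) /
          ((∫ x in Set.Ioi (0 : ℝ),
              x ^ 3 * (Real.exp (-3 * x) + Real.exp (-x)) / (1 + Real.exp (-x)) ^ 4) /
            r ^ 4))
      (𝓝[>] (0 : ℝ)) (𝓝 1) ∧
    Tendsto
      (fun t : ℝ =>
        (∑' k : ℕ, (k : ℝ) ^ 3 * (t ^ (3 * k) + t ^ k) / (1 + t ^ k) ^ 4) /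
          Real.sqrt (∑' k : ℕ, (k : ℝ) ^ 2 * t ^ k / (1 + t ^ k) ^ 2) ^ 3)
      (𝓝[<] (1 : ℝ)) (𝓝 0) := by
  simp_rw [tsum_thirdMoment_eq, tsum_variance_eq, integral_thirdMoment_eq]
  have hΓ := tendsto_pow_mul_tsum_pow_mul_comp_exp_neg continuousOn_thirdMomentWeight
    (fun _ => abs_thirdMomentWeight_le) 3
  have hσ := tendsto_pow_mul_tsum_pow_mul_comp_exp_neg continuousOn_varianceWeight
    (fun _ => abs_varianceWeight_le) 2
  have hC := integral_pow_mul_comp_exp_neg_pos continuousOn_thirdMomentWeight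
    (fun _ => abs_thirdMomentWeight_le) (fun _ hu => thirdMomentWeight_pos hu.1) 3
  have hb := integral_pow_mul_comp_exp_neg_pos continuousOn_varianceWeight
    (fun _ => abs_varianceWeight_le) (fun _ hu => varianceWeight_pos hu.1) 2
  constructor
  · refine (div_self hC.ne' ▸ hΓ.div_const _).congr' ?_
    filter_upwards [self_mem_nhdsWithin] with r hr
    field_simp
  · refine ((tendsto_div_sqrt_pow_three_of_scaling hb hΓ hσ).comp
      tendsto_neg_log_nhdsLT_one).congr' ?_
    filter_upwards [Ioo_mem_nhdsLT (zero_lt_one' ℝ)] with t ht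
    simp [Function.comp, exp_log ht.1]
end

section
/- Let σ²(t) = ∑_{k=1}^{∞} k² tᵏ/(1+tᵏ)² for t ∈ (0,1). Then lim_{t→1⁻} sup_{n≥1} [n² tⁿ/(1+tⁿ)²] / σ²(t) = 0. -/
/-! The factor `1 + zᵏ` has variance `k² tᵏ/(1+tᵏ)²`, which lies between `k² tᵏ / 4` and `k² tᵏ`.
So the `m` factors with index in `[n, n + m)` each have variance at least `n² tⁿ⁺ᵐ / 4`, while the
`n`-th has variance at most `n² tⁿ`. Hence `σ²(t) ≥ (m tᵐ / 4) · n² tⁿ/(1+tⁿ)²` for every `n`, and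
letting `t → 1⁻` with `m` fixed bounds the ratio by about `4 / m`. -/

open Filter Topology

noncomputable def factorVariance (t : ℝ) (k : ℕ) : ℝ := (k : ℝ) ^ 2 * t ^ k / (1 + t ^ k) ^ 2

namespace factorVariance

variable {t : ℝ}

lemma nonneg (ht : 0 ≤ t) (k : ℕ) : 0 ≤ factorVariance t k := by
  unfold factorVariance; positivity

lemma le_sq_mul_pow (ht : 0 ≤ t) (k : ℕ) : factorVariance t k ≤ (k : ℝ) ^ 2 * t ^ k := by
  have htk : 0 ≤ t ^ k := pow_nonneg ht k
  exact div_le_self (by positivity) (by nlinarith)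

lemma sq_mul_pow_le (ht₀ : 0 ≤ t) (ht₁ : t ≤ 1) (k : ℕ) :
    (k : ℝ) ^ 2 * t ^ k / 4 ≤ factorVariance t k := by
  have htk : 0 ≤ t ^ k := pow_nonneg ht₀ k
  have htk' : t ^ k ≤ 1 := pow_le_one₀ ht₀ ht₁
  exact div_le_div_of_nonneg_left (by positivity) (by positivity) (by nlinarith)

lemma summable (ht₀ : 0 ≤ t) (ht₁ : t < 1) : Summable (factorVariance t) := by
  refine Summable.of_nonneg_of_le (nonneg ht₀) (le_sq_mul_pow ht₀) ?_
  simpa using summable_pow_mul_geometric_of_norm_lt_one (R := ℝ) 2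
    (by rwa [Real.norm_eq_abs, abs_of_nonneg ht₀])

lemma pow_mul_le_of_mem_Ico (ht₀ : 0 ≤ t) (ht₁ : t ≤ 1) {n m k : ℕ}
    (hk : k ∈ Finset.Ico n (n + m)) :
    t ^ m * factorVariance t n ≤ 4 * factorVariance t k := by
  obtain ⟨hnk, hkm⟩ := Finset.mem_Ico.mp hk
  have hsq : (n : ℝ) ^ 2 ≤ (k : ℝ) ^ 2 := by gcongr
  have hpow : t ^ (n + m) ≤ t ^ k := pow_le_pow_of_le_one ht₀ ht₁ hkm.le
  calc t ^ m * factorVariance t n ≤ t ^ m * ((n : ℝ) ^ 2 * t ^ n) :=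
        mul_le_mul_of_nonneg_left (le_sq_mul_pow ht₀ n) (pow_nonneg ht₀ m)
    _ = (n : ℝ) ^ 2 * t ^ (n + m) := by ring
    _ ≤ (k : ℝ) ^ 2 * t ^ k := by gcongr
    _ ≤ 4 * factorVariance t k := by linarith [sq_mul_pow_le ht₀ ht₁ k]

lemma mul_pow_mul_le_tsum (ht₀ : 0 ≤ t) (ht₁ : t < 1) (n m : ℕ) :
    m * t ^ m * factorVariance t n ≤ 4 * ∑' k, factorVariance t k := by
  calc m * t ^ m * factorVariance t n
      = ∑ _k ∈ Finset.Ico n (n + m), t ^ m * factorVariance t n := by simp [mul_assoc]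
    _ ≤ ∑ k ∈ Finset.Ico n (n + m), 4 * factorVariance t k :=
        Finset.sum_le_sum fun k hk => pow_mul_le_of_mem_Ico ht₀ ht₁.le hk
    _ = 4 * ∑ k ∈ Finset.Ico n (n + m), factorVariance t k := by rw [Finset.mul_sum]
    _ ≤ 4 * ∑' k, factorVariance t k := by
        gcongr
        exact (summable ht₀ ht₁).sum_le_tsum _ fun k _ => nonneg ht₀ k

lemma div_tsum_le (ht₀ : 0 ≤ t) (ht₁ : t < 1) {ε : ℝ} {m : ℕ} (hε : 0 < ε)
    (hm : 4 ≤ ε * m * t ^ m) (n : ℕ) :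
    factorVariance t n / ∑' k, factorVariance t k ≤ ε := by
  have hv := nonneg ht₀ n
  have hblock := mul_pow_mul_le_tsum ht₀ ht₁ n m
  refine div_le_of_le_mul₀ (tsum_nonneg (nonneg ht₀)) hε.le ?_
  nlinarith

end factorVariance

/-- Uniform negligibility of individual variances: with
`σ²(t) = ∑_{k≥1} k² tᵏ/(1+tᵏ)²`, one has
`lim_{t→1⁻} sup_{n≥1} (n² tⁿ/(1+tⁿ)²)/σ²(t) = 0`, stated here in `ε`-form. -/
theorem sup_variance_ratio_tendsto_zero :
    ∀ ε > (0 : ℝ), ∀ᶠ t in 𝓝[<] (1 : ℝ), ∀ n : ℕ, 1 ≤ n →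
      ((n : ℝ) ^ 2 * t ^ n / (1 + t ^ n) ^ 2) /
          (∑' k : ℕ, (k : ℝ) ^ 2 * t ^ k / (1 + t ^ k) ^ 2) ≤ ε := by
  intro ε hε
  obtain ⟨m, hm⟩ := exists_nat_gt (4 / ε)
  have hεm : 4 < ε * m := by rwa [div_lt_iff₀ hε, mul_comm] at hm
  have hlim : Tendsto (fun t : ℝ => ε * m * t ^ m) (𝓝[<] 1) (𝓝 (ε * m)) := by
    simpa using ((continuous_pow m).const_mul (ε * m)).continuousWithinAt.tendsto (x := 1)
  filter_upwards [hlim.eventually_const_le hεm, self_mem_nhdsWithin,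
    Ioo_mem_nhdsLT (zero_lt_one' ℝ)] with t hmt ht₁ ht₀ n _
  exact factorVariance.div_tsum_le ht₀.1.le ht₁ hε hmt n
end

section
/- Let σ²(t) = ∑_{k=1}^{∞} k² tᵏ/(1+tᵏ)² and Γ₃(t) = ∑_{k=1}^{∞} k³ (t^{3k}+tᵏ)/(1+tᵏ)⁴ for t ∈ (0,1). Then for every t ∈ (0,1) and every θ ∈ ℝ with |θ| ≤ σ(t)³/(4 Γ₃(t)), one has ∏_{k=1}^{∞} |1 + tᵏ e^{i k θ/σ(t)}| / (1 + tᵏ) ≤ e^{−θ²/3}. -/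
open Filter Topology

/-!
Write `p = tᵏ/(1+tᵏ)` and `x = kθ/σ`. The squared `k`-th factor is
`1 - 2p(1-p)(1 - cos x) ≤ exp(-2p(1-p)(1 - cos x))`, so the product is at most
`exp(-∑ₖ p(1-p)(1 - cos x))`. The bound `1 - cos x ≥ x²/2 - |x|³/3` shows that this exponent
is at least `θ²/2 - (|θ|³/(3σ³)) ∑ₖ k³p(1-p)`. Since `∑ₖ k³p(1-p) ≤ 2Γ₃`, the hypothesis
`|θ| ≤ σ³/(4Γ₃)` bounds the cubic term by `θ²/6`.
-/

/-- `σ²(t)`; the `k = 0` term of the sum vanishes. -/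
noncomputable def sigma2 (t : ℝ) : ℝ :=
  ∑' k : ℕ, (k : ℝ) ^ 2 * t ^ k / (1 + t ^ k) ^ 2

/-- `Γ₃(t)`; the `k = 0` term of the sum vanishes. -/
noncomputable def Gamma3 (t : ℝ) : ℝ :=
  ∑' k : ℕ, (k : ℝ) ^ 3 * (t ^ (3 * k) + t ^ k) / (1 + t ^ k) ^ 4

theorem Real.cos_le_one_sub_sq_div_two_add_abs_cube_div_three (x : ℝ) :
    Real.cos x ≤ 1 - x ^ 2 / 2 + |x| ^ 3 / 3 := by
  rcases le_or_gt |x| (3 / 2) with hx | hx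
  · -- `1 - cos x = 2 sin² (|x|/2)` and `sin y ≥ y - y³/6`
    set y := |x| / 2 with hy
    have hy0 : 0 ≤ y := by positivity
    have hcos : Real.cos x = 1 - 2 * Real.sin y ^ 2 := by
      rw [Real.sin_sq_eq_half_sub, hy, ← Real.cos_abs x]
      ring_nf
    have hy1 : y ≤ 3 / 4 := by linarith
    have hsin := pow_le_pow_left₀ (by nlinarith [mul_nonneg hy0 hy0])
      (Real.sin_ge_sub_cube hy0) 2
    rw [hcos, ← sq_abs x, show |x| = 2 * y by linarith]
    nlinarith [pow_nonneg hy0 3, pow_nonneg hy0 4, pow_nonneg hy0 6]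
  · nlinarith [Real.cos_le_one x, sq_abs x, sq_nonneg x]

theorem Complex.norm_one_add_mul_exp_div_sq (r x : ℝ) (hr : 1 + r ≠ 0) :
    (‖1 + (r : ℂ) * Complex.exp (x * Complex.I)‖ / (1 + r)) ^ 2
      = 1 - 2 * (r * (1 - Real.cos x) / (1 + r) ^ 2) := by
  have hz : 1 + (r : ℂ) * Complex.exp (x * Complex.I)
      = ((1 + r * Real.cos x : ℝ) : ℂ) + ((r * Real.sin x : ℝ) : ℂ) * Complex.I := by
    rw [Complex.exp_mul_I, ← Complex.ofReal_cos, ← Complex.ofReal_sin]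
    push_cast
    ring
  rw [div_pow, Complex.sq_norm, hz, Complex.normSq_add_mul_I]
  field_simp
  linear_combination r ^ 2 * Real.sin_sq_add_cos_sq x

theorem Real.tprod_le_exp_neg_tsum_of_sq_eq_one_sub {ι : Type*} {a c : ι → ℝ}
    (ha : ∀ i, 0 ≤ a i) (hac : ∀ i, a i ^ 2 = 1 - 2 * c i) (hc : Summable c) :
    ∏' i, a i ≤ Real.exp (-∑' i, c i) := by
  have hle : ∀ i, a i ≤ Real.exp (-c i) := fun i => by
    refine (pow_le_pow_iff_left₀ (ha i) (Real.exp_pos _).le two_ne_zero).1 ?_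
    rw [hac, ← Real.exp_nat_mul, Nat.cast_ofNat]
    linarith [Real.add_one_le_exp (2 * -c i)]
  have hmul : Multipliable a := by
    have hsub : Summable fun i => a i - 1 := by
      refine (hc.norm.mul_left 2).of_norm_bounded fun i => ?_
      have ha1 : 0 ≤ a i + 1 := by linarith [ha i]
      calc ‖a i - 1‖ ≤ |a i - 1| * (a i + 1) :=
            le_mul_of_one_le_right (abs_nonneg _) (by linarith [ha i])
        _ = |(a i - 1) * (a i + 1)| := by rw [abs_mul, abs_of_nonneg ha1]
        _ = 2 * ‖c i‖ := by
            rw [show (a i - 1) * (a i + 1) = -2 * c i by linear_combination hac i, abs_mul]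
            norm_num
    simpa using Real.multipliable_one_add_of_summable hsub
  exact le_of_tendsto_of_tendsto' hmul.hasProd hc.hasSum.neg.rexp
    fun s => Finset.prod_le_prod (fun i _ => ha i) fun i _ => hle i

section PartitionMoments

variable {t : ℝ}

theorem summable_pow_mul_pow_div_one_add_pow_sq (n : ℕ) (ht0 : 0 ≤ t) (ht1 : t < 1) :
    Summable fun k : ℕ => (k : ℝ) ^ n * t ^ k / (1 + t ^ k) ^ 2 := by
  refine .of_nonneg_of_le (fun k => by positivity) (fun k => ?_)
    (summable_pow_mul_geometric_of_norm_lt_one n (by rwa [Real.norm_eq_abs, abs_of_nonneg ht0]))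
  exact div_le_self (by positivity) (one_le_pow₀ (le_add_of_nonneg_right (by positivity)))

theorem Gamma3_term_eq (ht0 : 0 ≤ t) (k : ℕ) :
    (k : ℝ) ^ 3 * (t ^ (3 * k) + t ^ k) / (1 + t ^ k) ^ 4
      = (k : ℝ) ^ 3 * t ^ k / (1 + t ^ k) ^ 2 * ((1 + (t ^ k) ^ 2) / (1 + t ^ k) ^ 2) := by
  have : (1 + t ^ k) ≠ 0 := by positivity
  rw [pow_mul']
  field_simp
  ring

theorem summable_Gamma3_term (ht0 : 0 ≤ t) (ht1 : t < 1) :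
    Summable fun k : ℕ => (k : ℝ) ^ 3 * (t ^ (3 * k) + t ^ k) / (1 + t ^ k) ^ 4 := by
  refine .of_nonneg_of_le (fun k => by positivity) (fun k => ?_)
    (summable_pow_mul_pow_div_one_add_pow_sq 3 ht0 ht1)
  have hq : 0 ≤ t ^ k := by positivity
  rw [Gamma3_term_eq ht0]
  exact mul_le_of_le_one_right (by positivity) (div_le_one_of_le₀ (by nlinarith) (by positivity))

theorem sigma2_pos (ht0 : 0 < t) (ht1 : t < 1) : 0 < sigma2 t :=
  (summable_pow_mul_pow_div_one_add_pow_sq 2 ht0.le ht1).tsum_pos (fun k => by positivity) 1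
    (by positivity)

theorem Gamma3_pos (ht0 : 0 < t) (ht1 : t < 1) : 0 < Gamma3 t :=
  (summable_Gamma3_term ht0.le ht1).tsum_pos (fun k => by positivity) 1 (by positivity)

theorem tsum_pow_three_mul_pow_div_one_add_pow_sq_le_two_mul_Gamma3 (ht0 : 0 ≤ t) (ht1 : t < 1) :
    ∑' k : ℕ, (k : ℝ) ^ 3 * t ^ k / (1 + t ^ k) ^ 2 ≤ 2 * Gamma3 t := by
  rw [Gamma3, ← tsum_mul_left]
  refine Summable.tsum_le_tsum (fun k => ?_) (summable_pow_mul_pow_div_one_add_pow_sq 3 ht0 ht1)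
    ((summable_Gamma3_term ht0 ht1).mul_left 2)
  have hq : 0 ≤ t ^ k := by positivity
  have hw : 1 / 2 ≤ (1 + (t ^ k) ^ 2) / (1 + t ^ k) ^ 2 := by
    rw [div_le_div_iff₀ two_pos (by positivity)]
    nlinarith [sq_nonneg (1 - t ^ k)]
  rw [Gamma3_term_eq ht0]
  nlinarith [show 0 ≤ (k : ℝ) ^ 3 * t ^ k / (1 + t ^ k) ^ 2 by positivity]

theorem summable_pow_mul_one_sub_cos_div_one_add_pow_sq (ht0 : 0 ≤ t) (ht1 : t < 1) (u : ℝ) :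
    Summable fun k : ℕ => t ^ k * (1 - Real.cos (k * u)) / (1 + t ^ k) ^ 2 := by
  refine .of_nonneg_of_le (fun k => ?_) (fun k => ?_)
    ((summable_pow_mul_pow_div_one_add_pow_sq 2 ht0 ht1).mul_left (u ^ 2 / 2))
  · have := Real.cos_le_one (k * u)
    have : 0 ≤ 1 - Real.cos (k * u) := by linarith
    positivity
  · have := Real.one_sub_sq_div_two_le_cos (x := k * u)
    have hp : 0 ≤ t ^ k / (1 + t ^ k) ^ 2 := by positivity
    calc t ^ k * (1 - Real.cos (k * u)) / (1 + t ^ k) ^ 2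
        = t ^ k / (1 + t ^ k) ^ 2 * (1 - Real.cos (k * u)) := by ring
      _ ≤ t ^ k / (1 + t ^ k) ^ 2 * ((k * u) ^ 2 / 2) := by gcongr; linarith
      _ = _ := by ring

theorem sq_div_two_mul_sigma2_sub_le_tsum (ht0 : 0 ≤ t) (ht1 : t < 1) (u : ℝ) :
    u ^ 2 / 2 * sigma2 t - |u| ^ 3 / 3 * (2 * Gamma3 t)
      ≤ ∑' k : ℕ, t ^ k * (1 - Real.cos (k * u)) / (1 + t ^ k) ^ 2 := by
  have hA2 := summable_pow_mul_pow_div_one_add_pow_sq 2 ht0 ht1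
  have hA3 := summable_pow_mul_pow_div_one_add_pow_sq 3 ht0 ht1
  have hterm : ∀ k : ℕ, u ^ 2 / 2 * ((k : ℝ) ^ 2 * t ^ k / (1 + t ^ k) ^ 2)
      - |u| ^ 3 / 3 * ((k : ℝ) ^ 3 * t ^ k / (1 + t ^ k) ^ 2)
        ≤ t ^ k * (1 - Real.cos (k * u)) / (1 + t ^ k) ^ 2 := fun k => by
    have h := Real.cos_le_one_sub_sq_div_two_add_abs_cube_div_three (k * u)
    rw [abs_mul, Nat.abs_cast] at h
    have hp : 0 ≤ t ^ k / (1 + t ^ k) ^ 2 := by positivity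
    calc _ = t ^ k / (1 + t ^ k) ^ 2 * ((k * u) ^ 2 / 2 - (k * |u|) ^ 3 / 3) := by ring
      _ ≤ t ^ k / (1 + t ^ k) ^ 2 * (1 - Real.cos (k * u)) :=
          mul_le_mul_of_nonneg_left (by linarith) hp
      _ = _ := by ring
  calc u ^ 2 / 2 * sigma2 t - |u| ^ 3 / 3 * (2 * Gamma3 t)
      ≤ u ^ 2 / 2 * sigma2 t - |u| ^ 3 / 3 * ∑' k : ℕ, (k : ℝ) ^ 3 * t ^ k / (1 + t ^ k) ^ 2 := by
        gcongr
        exact tsum_pow_three_mul_pow_div_one_add_pow_sq_le_two_mul_Gamma3 ht0 ht1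
    _ = ∑' k : ℕ, (u ^ 2 / 2 * ((k : ℝ) ^ 2 * t ^ k / (1 + t ^ k) ^ 2)
          - |u| ^ 3 / 3 * ((k : ℝ) ^ 3 * t ^ k / (1 + t ^ k) ^ 2)) := by
        rw [Summable.tsum_sub (hA2.mul_left _) (hA3.mul_left _), tsum_mul_left, tsum_mul_left,
          sigma2]
    _ ≤ _ := Summable.tsum_le_tsum hterm ((hA2.mul_left _).sub (hA3.mul_left _))
        (summable_pow_mul_one_sub_cos_div_one_add_pow_sq ht0 ht1 u)

theorem sq_div_three_le_tsum_one_sub_cos (ht0 : 0 < t) (ht1 : t < 1) {θ : ℝ}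
    (hθ : |θ| ≤ √(sigma2 t) ^ 3 / (4 * Gamma3 t)) :
    θ ^ 2 / 3 ≤ ∑' k : ℕ, t ^ k * (1 - Real.cos (k * (θ / √(sigma2 t)))) / (1 + t ^ k) ^ 2 := by
  have hσ := sigma2_pos ht0 ht1
  set s := √(sigma2 t)
  have hs : 0 < s := Real.sqrt_pos.2 hσ
  have hs2 : sigma2 t = s ^ 2 := (Real.sq_sqrt hσ.le).symm
  have hθΓ : |θ| * Gamma3 t ≤ s ^ 3 / 4 := by
    rw [le_div_iff₀ (by linarith [Gamma3_pos ht0 ht1])] at hθ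
    linarith
  refine le_trans ?_ (sq_div_two_mul_sigma2_sub_le_tsum ht0.le ht1 (θ / s))
  have hquad : (θ / s) ^ 2 / 2 * sigma2 t = θ ^ 2 / 2 := by
    rw [hs2]
    field_simp
  have hcubic : |θ / s| ^ 3 / 3 * (2 * Gamma3 t) ≤ θ ^ 2 / 6 :=
    calc |θ / s| ^ 3 / 3 * (2 * Gamma3 t) = 2 / 3 * θ ^ 2 * (|θ| * Gamma3 t) / s ^ 3 := by
          rw [abs_div, abs_of_pos hs, ← sq_abs θ]
          ring
      _ ≤ 2 / 3 * θ ^ 2 * (s ^ 3 / 4) / s ^ 3 := by gcongr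
      _ = θ ^ 2 / 6 := by
          field_simp
          ring
  linarith

end PartitionMoments

/-- The `k = 0` factor of the product equals `1`. -/
theorem charFun_bound_small_theta
    (t : ℝ) (ht : t ∈ Set.Ioo (0 : ℝ) 1) (θ : ℝ)
    (hθ : |θ| ≤ Real.sqrt (sigma2 t) ^ 3 / (4 * Gamma3 t)) :
    (∏' k : ℕ, ‖1 + (t : ℂ) ^ k *
          Complex.exp (Complex.I * (k : ℂ) * (θ : ℂ) / ((Real.sqrt (sigma2 t) : ℝ) : ℂ))‖ /
        (1 + t ^ k)) ≤ Real.exp (-θ ^ 2 / 3) := by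
  obtain ⟨ht0, ht1⟩ := ht
  set u := θ / √(sigma2 t)
  have hexp : ∀ k : ℕ, (t : ℂ) ^ k *
        Complex.exp (Complex.I * (k : ℂ) * (θ : ℂ) / ((√(sigma2 t) : ℝ) : ℂ))
      = ((t ^ k : ℝ) : ℂ) * Complex.exp (((k * u : ℝ) : ℂ) * Complex.I) := fun k => by
    simp only [u]
    push_cast
    ring_nf
  have hfactor : ∀ k : ℕ, (‖1 + (t : ℂ) ^ k *
        Complex.exp (Complex.I * (k : ℂ) * (θ : ℂ) / ((√(sigma2 t) : ℝ) : ℂ))‖ / (1 + t ^ k)) ^ 2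
      = 1 - 2 * (t ^ k * (1 - Real.cos (k * u)) / (1 + t ^ k) ^ 2) := fun k => by
    rw [hexp, Complex.norm_one_add_mul_exp_div_sq _ _ (by positivity)]
  calc _ ≤ Real.exp (-∑' k : ℕ, t ^ k * (1 - Real.cos (k * u)) / (1 + t ^ k) ^ 2) :=
        Real.tprod_le_exp_neg_tsum_of_sq_eq_one_sub (fun k => by positivity) hfactor
          (summable_pow_mul_one_sub_cos_div_one_add_pow_sq ht0.le ht1 u)
    _ ≤ Real.exp (-θ ^ 2 / 3) :=
        Real.exp_le_exp.2 (by linarith [sq_div_three_le_tsum_one_sub_cos ht0 ht1 hθ])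
end

section
/- Let σ²(t) = ∑_{k=1}^{∞} k² tᵏ/(1+tᵏ)² for t ∈ (0,1). For every constant C > 0 there exist B > 0 and r₀ > 0 such that for all r ∈ (0, r₀) and all θ ∈ ℝ with C·r^{−1/2} ≤ |θ| ≤ π σ(e^{−r}), one has ∏_{k=1}^{∞} |1 + e^{−kr} e^{i k θ/σ(e^{−r})}| / (1 + e^{−kr}) ≤ e^{−B/r}. -/
open Filter Topology Real

/-!
Write `t = e^{-r}` and `α = θ/σ(t)`. Since `|1 + x e^{iφ}|² = (1+x)² - 2x(1 - cos φ)`, the `k`-th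
factor is at most `exp(-tᵏ(1 - cos kα)/(1+tᵏ)²) ≤ exp(-tᵏ(1 - cos kα)/4)`, so the product is at
most `exp(-S/4)` with `S = ∑ tᵏ(1 - cos kα)`. This geometric series sums to
`t(1+t)(1 - cos α)/((1-t)((1-t)² + 2t(1 - cos α)))`, which is of order `1/(1-t) ≍ 1/r` as soon as
`1 - cos α ≳ (1-t)²`. That is the case: `σ²(t) ≤ 2/(1-t)³ = O(r⁻³)` forces
`|α| ≥ C r^{-1/2}/σ ≳ r`, and `|α| ≤ π` gives `1 - cos α ≥ 2α²/π²`.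
-/

lemma multipliable_of_nonneg_of_le_one {ι : Type*} {a : ι → ℝ} (h0 : ∀ i, 0 ≤ a i)
    (h1 : ∀ i, a i ≤ 1) : Multipliable a :=
  ⟨_, tendsto_atTop_ciInf (Finset.prod_anti_set_of_le_one h0 h1)
    ⟨0, by rintro _ ⟨s, rfl⟩; exact Finset.prod_nonneg fun i _ ↦ h0 i⟩⟩

lemma tprod_le_exp_neg_tsum {ι : Type*} {a s : ι → ℝ} (ha : ∀ i, 0 ≤ a i) (hs : ∀ i, 0 ≤ s i)
    (hsum : Summable s) (has : ∀ i, a i ≤ exp (-s i)) : ∏' i, a i ≤ exp (-∑' i, s i) := by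
  have ha1 : ∀ i, a i ≤ 1 := fun i ↦ (has i).trans (exp_le_one_iff.2 (neg_nonpos.2 (hs i)))
  exact le_of_tendsto_of_tendsto' (multipliable_of_nonneg_of_le_one ha ha1).hasProd
    hsum.hasSum.neg.rexp fun F ↦ Finset.prod_le_prod (fun i _ ↦ ha i) fun i _ ↦ has i

lemma sigma2_le {t : ℝ} (h0 : 0 ≤ t) (h1 : t < 1) : sigma2 t ≤ 2 / (1 - t) ^ 3 := by
  have hchoose := hasSum_choose_mul_geometric_of_norm_lt_one 2 (r := t)
    (by rwa [norm_of_nonneg h0])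
  have hterm : ∀ k : ℕ, (k : ℝ) ^ 2 * t ^ k / (1 + t ^ k) ^ 2 ≤
      2 * ((k + 2).choose 2 * t ^ k) := by
    intro k
    have htk : 0 ≤ t ^ k := pow_nonneg h0 k
    rw [Nat.cast_choose_two]
    push_cast
    calc (k : ℝ) ^ 2 * t ^ k / (1 + t ^ k) ^ 2 ≤ (k : ℝ) ^ 2 * t ^ k :=
          div_le_self (by positivity) (one_le_pow₀ (by linarith))
      _ ≤ ((k : ℝ) + 2) * ((k : ℝ) + 2 - 1) * t ^ k :=
          mul_le_mul_of_nonneg_right (by nlinarith) htk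
      _ = _ := by ring
  calc sigma2 t ≤ ∑' k : ℕ, 2 * ((k + 2).choose 2 * t ^ k) :=
        Summable.tsum_le_tsum hterm
          (Summable.of_nonneg_of_le (fun k ↦ by positivity) hterm (hchoose.summable.mul_left 2))
          (hchoose.summable.mul_left 2)
    _ = 2 / (1 - t) ^ 3 := by rw [tsum_mul_left, hchoose.tsum_eq]; ring

lemma half_le_one_sub_exp_neg {r : ℝ} (hr0 : 0 ≤ r) (hr1 : r ≤ 1) : r / 2 ≤ 1 - exp (-r) := by
  have h : exp (-r) * (1 + r) ≤ 1 := by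
    calc exp (-r) * (1 + r) ≤ exp (-r) * exp r :=
          mul_le_mul_of_nonneg_left (by linarith [add_one_le_exp r]) (exp_pos _).le
      _ = 1 := by rw [← exp_add, neg_add_cancel, exp_zero]
  nlinarith [exp_pos (-r)]

lemma sqrt_sigma2_exp_neg_le {r : ℝ} (hr0 : 0 < r) (hr1 : r ≤ 1) :
    √(sigma2 (exp (-r))) ≤ 4 / (r * √r) := by
  have hgap := half_le_one_sub_exp_neg hr0.le hr1
  rw [sqrt_le_left (by positivity), div_pow, mul_pow, sq_sqrt hr0.le]
  calc sigma2 (exp (-r)) ≤ 2 / (1 - exp (-r)) ^ 3 :=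
        sigma2_le (exp_pos _).le (exp_lt_one_iff.2 (by linarith))
    _ ≤ 2 / (r / 2) ^ 3 := by gcongr
    _ = 4 ^ 2 / (r ^ 2 * r) := by ring

lemma mul_div_four_le_abs_div_sqrt_sigma2 {C r θ : ℝ} (hr0 : 0 < r) (hr1 : r ≤ 1)
    (hθ : C / √r ≤ |θ|) (hσ : 0 < √(sigma2 (exp (-r)))) :
    C * r / 4 ≤ |θ / √(sigma2 (exp (-r)))| := by
  calc C * r / 4 = C / √r / (4 / (r * √r)) := by field_simp
    _ ≤ |θ| / √(sigma2 (exp (-r))) :=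
        div_le_div₀ (abs_nonneg θ) hθ hσ (sqrt_sigma2_exp_neg_le hr0 hr1)
    _ = |θ / √(sigma2 (exp (-r)))| := by rw [abs_div, abs_of_pos hσ]

lemma sq_mul_le_one_sub_cos {c α : ℝ} (hc : 0 ≤ c) (hcα : c ≤ |α|) (hα : |α| ≤ π) :
    2 / π ^ 2 * c ^ 2 ≤ 1 - cos α := by
  have hsq : c ^ 2 ≤ α ^ 2 := by rw [← sq_abs α]; exact pow_le_pow_left₀ hc hcα 2
  linarith [cos_le_one_sub_mul_cos_sq hα,
    mul_le_mul_of_nonneg_left hsq (by positivity : (0 : ℝ) ≤ 2 / π ^ 2)]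

lemma norm_one_add_mul_exp_sq (x φ : ℝ) :
    ‖1 + x * Complex.exp (φ * Complex.I)‖ ^ 2 = (1 + x) ^ 2 - 2 * x * (1 - cos φ) := by
  rw [Complex.sq_norm, Complex.normSq_apply]
  simp only [Complex.add_re, Complex.add_im, Complex.re_ofReal_mul, Complex.im_ofReal_mul,
    Complex.one_re, Complex.one_im, Complex.exp_ofReal_mul_I_re, Complex.exp_ofReal_mul_I_im]
  linear_combination x ^ 2 * sin_sq_add_cos_sq φ

lemma norm_one_add_mul_exp_div_le {x : ℝ} (hx : 0 ≤ x) (φ : ℝ) :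
    ‖1 + x * Complex.exp (φ * Complex.I)‖ / (1 + x) ≤ exp (-(x * (1 - cos φ) / (1 + x) ^ 2)) := by
  set s := x * (1 - cos φ) / (1 + x) ^ 2 with hs
  have hx1 : 0 < 1 + x := by linarith
  rw [← pow_le_pow_iff_left₀ (by positivity) (exp_pos _).le two_ne_zero, div_pow,
    norm_one_add_mul_exp_sq, ← exp_nat_mul]
  calc ((1 + x) ^ 2 - 2 * x * (1 - cos φ)) / (1 + x) ^ 2 = 1 - 2 * s := by
        rw [hs]
        field_simp
    _ ≤ exp (-(2 * s)) := by linarith [add_one_le_exp (-(2 * s))]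
    _ = exp ((2 : ℕ) * -s) := by push_cast; ring_nf

lemma hasSum_pow_mul_one_sub_cos {t : ℝ} (h0 : 0 ≤ t) (h1 : t < 1) (α : ℝ) :
    HasSum (fun k : ℕ ↦ t ^ k * (1 - cos (k * α)))
      (t * (1 + t) * (1 - cos α) / ((1 - t) * ((1 - t) ^ 2 + 2 * t * (1 - cos α)))) := by
  set z : ℂ := t * Complex.exp (α * Complex.I) with hz
  have hz1 : ‖z‖ < 1 := by
    rwa [hz, norm_mul, Complex.norm_exp_ofReal_mul_I, mul_one, Complex.norm_real,
      norm_of_nonneg h0]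
  have hre : HasSum (fun k : ℕ ↦ t ^ k * cos (k * α)) ((1 - z)⁻¹).re := by
    refine (Complex.hasSum_re (hasSum_geometric_of_norm_lt_one hz1)).congr_fun fun k ↦ ?_
    rw [hz, mul_pow, ← Complex.exp_nat_mul, ← Complex.ofReal_pow, ← mul_assoc,
      ← Complex.ofReal_natCast, ← Complex.ofReal_mul, Complex.re_ofReal_mul,
      Complex.exp_ofReal_mul_I_re]
  have hnormSq : Complex.normSq (1 - z) = (1 - t) ^ 2 + 2 * t * (1 - cos α) := by
    have h := norm_one_add_mul_exp_sq (-t) α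
    rw [Complex.ofReal_neg, neg_mul, ← sub_eq_add_neg] at h
    rw [← Complex.sq_norm, h]
    ring
  have hre1 : (1 - z).re = 1 - t * cos α := by
    rw [hz, Complex.sub_re, Complex.one_re, Complex.re_ofReal_mul, Complex.exp_ofReal_mul_I_re]
  have hden : 0 < (1 - t) ^ 2 + 2 * t * (1 - cos α) := by
    nlinarith [cos_le_one α, mul_nonneg h0 (sub_nonneg.2 (cos_le_one α))]
  have hsum : t * (1 + t) * (1 - cos α) / ((1 - t) * ((1 - t) ^ 2 + 2 * t * (1 - cos α))) =
      (1 - t)⁻¹ - ((1 - z)⁻¹).re := by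
    have h1t : 1 - t ≠ 0 := by linarith
    rw [Complex.inv_re, hnormSq, hre1, inv_eq_one_div, div_sub_div _ _ h1t hden.ne',
      div_eq_div_iff (mul_ne_zero h1t hden.ne') (mul_ne_zero h1t hden.ne')]
    ring
  rw [hsum]
  exact ((hasSum_geometric_of_lt_one h0 h1).sub hre).congr_fun fun k ↦ by ring

lemma div_one_sub_le_tsum_pow_mul_one_sub_cos {t α δ : ℝ} (ht : 1 / 2 ≤ t) (ht1 : t < 1)
    (hδ : 0 ≤ δ) (hα : δ * (1 - t) ^ 2 ≤ 1 - cos α) :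
    δ / (2 * (1 + 2 * δ)) / (1 - t) ≤ ∑' k : ℕ, t ^ k * (1 - cos (k * α)) := by
  have hcos := sub_nonneg.2 (cos_le_one α)
  rw [(hasSum_pow_mul_one_sub_cos (by linarith) ht1 α).tsum_eq, mul_comm (1 - t),
    ← div_div _ _ (1 - t)]
  refine div_le_div_of_nonneg_right ?_ (by linarith)
  have ht0 : 0 ≤ t := by linarith
  rw [div_le_div_iff₀ (by positivity)
    (by nlinarith [mul_nonneg ht0 hcos, pow_pos (by linarith : (0 : ℝ) < 1 - t) 2])]
  nlinarith [mul_nonneg hδ hcos, mul_nonneg (mul_nonneg hδ hcos) (by linarith : 0 ≤ 1 - t)]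

lemma tprod_norm_one_add_pow_mul_exp_div_le {t : ℝ} (h0 : 0 ≤ t) (h1 : t < 1) (α : ℝ) :
    ∏' k : ℕ, ‖1 + (t : ℂ) ^ k * Complex.exp ((k * α : ℝ) * Complex.I)‖ / (1 + t ^ k) ≤
      exp (-(∑' k : ℕ, t ^ k * (1 - cos (k * α))) / 4) := by
  have hu := hasSum_pow_mul_one_sub_cos h0 h1 α
  set s : ℕ → ℝ := fun k ↦ t ^ k * (1 - cos (k * α)) / (1 + t ^ k) ^ 2
  have htk0 : ∀ k : ℕ, 0 ≤ t ^ k := fun k ↦ pow_nonneg h0 k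
  have htk1 : ∀ k : ℕ, t ^ k ≤ 1 := fun k ↦ pow_le_one₀ h0 h1.le
  have hcos : ∀ k : ℕ, 0 ≤ 1 - cos (k * α) := fun k ↦ sub_nonneg.2 (cos_le_one _)
  have hs0 : ∀ k : ℕ, 0 ≤ s k := fun k ↦ by have := hcos k; have := htk0 k; positivity
  have hquarter_le : ∀ k : ℕ, t ^ k * (1 - cos (k * α)) / 4 ≤ s k := fun k ↦
    div_le_div_of_nonneg_left (mul_nonneg (htk0 k) (hcos k)) (by positivity)
      (by nlinarith [htk0 k, htk1 k])
  have hs_le : ∀ k : ℕ, s k ≤ t ^ k * (1 - cos (k * α)) := fun k ↦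
    div_le_self (mul_nonneg (htk0 k) (hcos k)) (by nlinarith [htk0 k])
  have hs : Summable s := Summable.of_nonneg_of_le hs0 hs_le hu.summable
  calc _ ≤ exp (-∑' k, s k) :=
        tprod_le_exp_neg_tsum (fun k ↦ by positivity) hs0 hs fun k ↦ by
          simpa only [Complex.ofReal_pow] using norm_one_add_mul_exp_div_le (htk0 k) (k * α)
    _ ≤ _ := by
        rw [neg_div, exp_le_exp, neg_le_neg_iff, ← tsum_div_const]
        exact Summable.tsum_le_tsum hquarter_le (hu.summable.div_const 4) hs

/-- Exponential bound on the characteristic function of `Z_t` away from the origin: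
for every `C > 0` there are `B > 0` and `r₀ > 0` such that for `0 < r < r₀` and
`C r^{−1/2} ≤ |θ| ≤ π σ(e^{−r})` one has
`∏_{k≥1} |1 + e^{−kr} e^{ikθ/σ(e^{−r})}|/(1+e^{−kr}) ≤ e^{−B/r}`.
(The `k = 0` factor of the product equals `1`.) -/
theorem charFun_bound_large_theta (C : ℝ) (hC : 0 < C) :
    ∃ B > (0 : ℝ), ∃ r₀ > (0 : ℝ), ∀ r ∈ Set.Ioo (0 : ℝ) r₀, ∀ θ : ℝ,
      C / Real.sqrt r ≤ |θ| → |θ| ≤ π * Real.sqrt (sigma2 (Real.exp (-r))) →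
      (∏' k : ℕ, ‖
          (1 + (Real.exp (-r) : ℂ) ^ k *
            Complex.exp (Complex.I * (k : ℂ) * (θ : ℂ) /
              ((Real.sqrt (sigma2 (Real.exp (-r))) : ℝ) : ℂ)))‖ /
          (1 + Real.exp (-r) ^ k)) ≤ Real.exp (-B / r) := by
  set δ := 2 / π ^ 2 * (C / 4) ^ 2
  have hδ : 0 < δ := by positivity
  refine ⟨δ / (2 * (1 + 2 * δ)) / 4, by positivity, 1 / 2, by norm_num, ?_⟩
  rintro r ⟨hr0, hr1⟩ θ hθC hθσ
  set t := exp (-r)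
  have ht1 : t < 1 := exp_lt_one_iff.2 (by linarith)
  have htr : 1 - t ≤ r := by linarith [one_sub_le_exp_neg r]
  set σ := √(sigma2 t)
  have hσ : 0 < σ :=
    pos_of_mul_pos_right (((div_pos hC (sqrt_pos.2 hr0)).trans_le hθC).trans_le hθσ) pi_pos.le
  set α := θ / σ
  have hαπ : |α| ≤ π := by rwa [abs_div, abs_of_pos hσ, div_le_iff₀ hσ]
  have hαt : C * (1 - t) / 4 ≤ |α| :=
    le_trans (by gcongr) (mul_div_four_le_abs_div_sqrt_sigma2 hr0 (by linarith) hθC hσ)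
  have hcos : δ * (1 - t) ^ 2 ≤ 1 - cos α := by
    calc δ * (1 - t) ^ 2 = 2 / π ^ 2 * (C * (1 - t) / 4) ^ 2 := by ring
      _ ≤ 1 - cos α := sq_mul_le_one_sub_cos (by nlinarith) hαt hαπ
  have hexponent : ∀ k : ℕ, Complex.I * k * θ / (σ : ℂ) = ((k * α : ℝ) : ℂ) * Complex.I := by
    intro k
    simp only [α, Complex.ofReal_mul, Complex.ofReal_div, Complex.ofReal_natCast]
    ring
  simp only [hexponent]
  refine (tprod_norm_one_add_pow_mul_exp_div_le (exp_pos _).le ht1 α).trans (exp_le_exp.2 ?_)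
  have hsum := div_one_sub_le_tsum_pow_mul_one_sub_cos (by linarith) ht1 hδ.le hcos
  have hbound : δ / (2 * (1 + 2 * δ)) / r ≤ δ / (2 * (1 + 2 * δ)) / (1 - t) :=
    div_le_div_of_nonneg_left (by positivity) (by linarith) htr
  rw [neg_div, neg_div, neg_le_neg_iff, div_div, mul_comm 4 r, ← div_div]
  linarith
end

section
/- For each θ ∈ ℝ, with m(t) = ∑_{k=1}^{∞} k tᵏ/(1+tᵏ) and σ²(t) = ∑_{k=1}^{∞} k² tᵏ/(1+tᵏ)², one has lim_{t→1⁻} e^{−iθ m(t)/σ(t)} ∏_{k=1}^{∞} (1 + tᵏ e^{i k θ/σ(t)})/(1 + tᵏ) = e^{−θ²/2}. -/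
/-!
With `aₖ = tᵏ/(1+tᵏ)`, the `k`-th factor of the product is `1 + aₖ (e^{iky} − 1)`, the
characteristic function of `k` times a Bernoulli(`aₖ`) variable, so its logarithm is
`i aₖ k y − (aₖ − aₖ²) k² y²/2 + O(aₖ k³ |y|³)`. For `y = θ/σ(t)` the linear terms sum to
`iθm/σ` and cancel the centring factor, the quadratic terms sum to exactly `−θ²/2`, and the
error is `O(|θ|³ σ⁻³ ∑ k³tᵏ) = O(σ⁻³ (1−t)⁻⁴)`, which is `O((1−t)^{1/2})` because
`σ² ≥ (1−t)⁻³/16`.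
-/

open Filter Topology Real

/-- The mean `m(t) = ∑_{k≥1} k tᵏ/(1+tᵏ)` associated to `∏(1+zᵏ)`
(the `k = 0` term vanishes). -/
noncomputable def meanQ (t : ℝ) : ℝ :=
  ∑' k : ℕ, (k : ℝ) * t ^ k / (1 + t ^ k)

/-- The standard deviation `σ(t)`, with `σ²(t) = ∑_{k≥1} k² tᵏ/(1+tᵏ)²`
(the `k = 0` term vanishes). -/
noncomputable def sigmaQ (t : ℝ) : ℝ :=
  Real.sqrt (∑' k : ℕ, (k : ℝ) ^ 2 * t ^ k / (1 + t ^ k) ^ 2)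

/-- The characteristic function `φ_t` of the centered normalized variable `Z_t`:
`φ_t(θ) = e^{−iθm(t)/σ(t)} ∏_{k≥1} (1 + tᵏ e^{ikθ/σ(t)})/(1+tᵏ)`
(the `k = 0` factor of the product equals `1`). -/
noncomputable def phiQ (t θ : ℝ) : ℂ :=
  Complex.exp (-Complex.I * (θ : ℂ) * ((meanQ t : ℝ) : ℂ) / ((sigmaQ t : ℝ) : ℂ)) *
    ∏' k : ℕ,
      (1 + (t : ℂ) ^ k * Complex.exp (Complex.I * (k : ℂ) * (θ : ℂ) / ((sigmaQ t : ℝ) : ℂ))) /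
        (1 + (t : ℂ) ^ k)

open Complex (I)
open scoped Complex

lemma norm_ofReal_mul_cexp_I_mul_ofReal_sub_one_le {a : ℝ} (ha : 0 ≤ a) (y : ℝ) :
    ‖(a : ℂ) * (cexp (I * y) - 1)‖ ≤ a * |y| := by
  rw [norm_mul, Complex.norm_of_nonneg ha]
  gcongr
  simpa using Real.norm_exp_I_mul_ofReal_sub_one_le (x := y)

lemma norm_cexp_I_mul_ofReal_sub_one_sub_le (y : ℝ) :
    ‖cexp (I * y) - 1 - I * y‖ ≤ 2 * y ^ 2 := by
  have hx : ‖I * y‖ = |y| := by simp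
  rcases le_or_gt |y| 1 with hy | hy
  · calc ‖cexp (I * y) - 1 - I * y‖ ≤ ‖I * y‖ ^ 2 :=
          Complex.norm_exp_sub_one_sub_id_le (hx ▸ hy)
      _ ≤ 2 * y ^ 2 := by rw [hx, sq_abs]; nlinarith [sq_nonneg y]
  · have hw : ‖cexp (I * y) - 1‖ ≤ |y| := by
      simpa using Real.norm_exp_I_mul_ofReal_sub_one_le (x := y)
    calc ‖cexp (I * y) - 1 - I * y‖ ≤ ‖cexp (I * y) - 1‖ + ‖I * y‖ := norm_sub_le _ _
      _ ≤ |y| + |y| := by rw [hx]; gcongr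
      _ ≤ 2 * y ^ 2 := by nlinarith [sq_abs y]

lemma norm_cexp_I_mul_ofReal_sub_one_sub_sub_le (y : ℝ) :
    ‖cexp (I * y) - 1 - I * y - (I * y) ^ 2 / 2‖ ≤ 3 * |y| ^ 3 := by
  have hx : ‖I * y‖ = |y| := by simp
  rcases le_or_gt |y| 1 with hy | hy
  · have h := Complex.exp_bound (x := I * y) (hx ▸ hy) (n := 3) (by norm_num)
    simp only [Finset.sum_range_succ, Finset.sum_range_zero, hx] at h
    norm_num [Nat.factorial] at h
    calc ‖cexp (I * y) - 1 - I * y - (I * y) ^ 2 / 2‖ ≤ |y| ^ 3 * (4 / 18) := by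
          convert h using 2 <;> ring
      _ ≤ 3 * |y| ^ 3 := by nlinarith [pow_nonneg (abs_nonneg y) 3]
  · calc ‖cexp (I * y) - 1 - I * y - (I * y) ^ 2 / 2‖
        ≤ ‖cexp (I * y) - 1 - I * y‖ + ‖(I * y) ^ 2 / 2‖ := norm_sub_le _ _
      _ ≤ 2 * y ^ 2 + y ^ 2 / 2 := by
          gcongr
          · exact norm_cexp_I_mul_ofReal_sub_one_sub_le y
          · simp
      _ ≤ 3 * |y| ^ 3 := by nlinarith [sq_abs y, abs_nonneg y]

lemma norm_log_one_add_sub_sub_le {z : ℂ} (hz : ‖z‖ ≤ 1 / 2) :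
    ‖Complex.log (1 + z) - (z - z ^ 2 / 2)‖ ≤ 2 / 3 * ‖z‖ ^ 3 := by
  have h := Complex.norm_log_sub_logTaylor_le 2 (z := z) (by linarith)
  have hT : Complex.logTaylor (2 + 1) z = z - z ^ 2 / 2 := by
    simp [Complex.logTaylor_succ, Complex.logTaylor_zero]; ring
  have hinv : (1 - ‖z‖)⁻¹ ≤ 2 := by
    rw [inv_le_comm₀ (by linarith) (by norm_num)]; linarith
  rw [hT] at h
  calc _ ≤ ‖z‖ ^ 3 * (1 - ‖z‖)⁻¹ / 3 := by convert h using 2; norm_num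
    _ ≤ ‖z‖ ^ 3 * 2 / 3 := by gcongr
    _ = 2 / 3 * ‖z‖ ^ 3 := by ring

lemma norm_log_one_add_mul_cexp_sub_one_sub_le {a y : ℝ} (ha0 : 0 ≤ a) (ha1 : a ≤ 1)
    (hay : a * |y| ≤ 1 / 2) :
    ‖Complex.log (1 + a * (cexp (I * y) - 1)) - (a * (I * y) + (a - a ^ 2) * (I * y) ^ 2 / 2)‖
      ≤ 6 * a * |y| ^ 3 := by
  set w := cexp (I * y) - 1
  set z := (a : ℂ) * w
  have ha : ‖(a : ℂ)‖ = a := Complex.norm_of_nonneg ha0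
  have hz : ‖z‖ ≤ a * |y| := norm_ofReal_mul_cexp_I_mul_ofReal_sub_one_le ha0 y
  have hlog : ‖Complex.log (1 + z) - (z - z ^ 2 / 2)‖ ≤ 2 / 3 * (a * |y|) ^ 3 :=
    calc _ ≤ 2 / 3 * ‖z‖ ^ 3 := norm_log_one_add_sub_sub_le (hz.trans hay)
      _ ≤ 2 / 3 * (a * |y|) ^ 3 := by gcongr
  have hexp : ‖(a : ℂ) * (w - I * y - (I * y) ^ 2 / 2)‖ ≤ a * (3 * |y| ^ 3) := by
    rw [norm_mul, ha]; gcongr; exact norm_cexp_I_mul_ofReal_sub_one_sub_sub_le y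
  have hsq : ‖(a : ℂ) ^ 2 / 2 * ((w - I * y) * (w + I * y))‖
      ≤ a ^ 2 / 2 * (2 * y ^ 2 * (|y| + |y|)) := by
    rw [norm_mul, norm_mul, norm_div, norm_pow, ha, Complex.norm_two]
    gcongr
    · exact norm_cexp_I_mul_ofReal_sub_one_sub_le y
    · refine (norm_add_le _ _).trans (add_le_add ?_ (by simp))
      simpa using Real.norm_exp_I_mul_ofReal_sub_one_le (x := y)
  have hsplit : Complex.log (1 + z) - (a * (I * y) + (a - a ^ 2) * (I * y) ^ 2 / 2)
      = (Complex.log (1 + z) - (z - z ^ 2 / 2)) + (a : ℂ) * (w - I * y - (I * y) ^ 2 / 2)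
        - (a : ℂ) ^ 2 / 2 * ((w - I * y) * (w + I * y)) := by
    ring
  have ha3 : a ^ 3 ≤ a := pow_le_of_le_one ha0 ha1 (by norm_num)
  have ha2 : a ^ 2 ≤ a := pow_le_of_le_one ha0 ha1 (by norm_num)
  have hy3 : 0 ≤ |y| ^ 3 := by positivity
  calc _ ≤ 2 / 3 * (a * |y|) ^ 3 + a * (3 * |y| ^ 3)
        + a ^ 2 / 2 * (2 * y ^ 2 * (|y| + |y|)) := by
        rw [hsplit]
        exact (norm_sub_le _ _).trans
          (add_le_add ((norm_add_le _ _).trans (add_le_add hlog hexp)) hsq)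
    _ = (2 / 3 * a ^ 3 + 3 * a + 2 * a ^ 2) * |y| ^ 3 := by
        rw [← sq_abs y]; ring
    _ ≤ 6 * a * |y| ^ 3 := by nlinarith

lemma hasProd_one_add_mul_cexp_sub_one {a y : ℕ → ℝ} (ha0 : ∀ k, 0 ≤ a k)
    (ha1 : ∀ k, a k ≤ 1) (hay : ∀ k, a k * |y k| ≤ 1 / 2)
    (h1 : Summable fun k ↦ a k * y k)
    (h2 : Summable fun k ↦ a k * y k ^ 2) (h3 : Summable fun k ↦ a k * |y k| ^ 3) :
    ∃ R : ℂ, ‖R‖ ≤ 6 * ∑' k, a k * |y k| ^ 3 ∧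
      HasProd (fun k ↦ 1 + a k * (cexp (I * y k) - 1))
        (cexp (I * (∑' k, a k * y k : ℝ) -
          (∑' k, (a k - a k ^ 2) * y k ^ 2 : ℝ) / 2 + R)) := by
  set main : ℕ → ℂ := fun k ↦ a k * (I * y k) + (a k - a k ^ 2) * (I * y k) ^ 2 / 2
  set r : ℕ → ℂ := fun k ↦ Complex.log (1 + a k * (cexp (I * y k) - 1)) - main k
  have hr : ∀ k, ‖r k‖ ≤ 6 * (a k * |y k| ^ 3) := fun k ↦ by
    rw [← mul_assoc]; exact norm_log_one_add_mul_cexp_sub_one_sub_le (ha0 k) (ha1 k) (hay k)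
  have hR : HasSum (fun k ↦ 6 * (a k * |y k| ^ 3)) (6 * ∑' k, a k * |y k| ^ 3) :=
    h3.hasSum.mul_left 6
  have hvar : Summable fun k ↦ (a k - a k ^ 2) * y k ^ 2 :=
    h2.of_nonneg_of_le (fun k ↦ mul_nonneg (by nlinarith [ha0 k, ha1 k]) (sq_nonneg _))
      (fun k ↦ by gcongr; nlinarith [sq_nonneg (a k)])
  have hmain : HasSum main
      (I * (∑' k, a k * y k : ℝ) - (∑' k, (a k - a k ^ 2) * y k ^ 2 : ℝ) / 2) :=
    (((Complex.hasSum_ofReal.2 h1.hasSum).mul_left I).sub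
      ((Complex.hasSum_ofReal.2 hvar.hasSum).div_const 2)).congr_fun fun k ↦ by
        push_cast
        linear_combination ((a k : ℂ) - a k ^ 2) * y k ^ 2 / 2 * Complex.I_sq
  have hne : ∀ k, 1 + a k * (cexp (I * y k) - 1) ≠ 0 := fun k hk ↦ by
    have := (norm_ofReal_mul_cexp_I_mul_ofReal_sub_one_le (ha0 k) (y k)).trans (hay k)
    rw [eq_neg_of_add_eq_zero_right hk] at this
    norm_num at this
  refine ⟨∑' k, r k, tsum_of_norm_bounded hR hr, Complex.hasProd_of_hasSum_log hne ?_⟩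
  exact (hmain.add (Summable.of_norm_bounded hR.summable hr).hasSum).congr_fun fun k ↦ by ring

lemma tendsto_cexp_of_eventually_eq_cexp_add {α : Type*} {l : Filter α} {f : α → ℂ} {w : ℂ}
    {b : α → ℝ} (hb : Tendsto b l (𝓝 0))
    (hf : ∀ᶠ x in l, ∃ R : ℂ, ‖R‖ ≤ b x ∧ f x = cexp (w + R)) :
    Tendsto f l (𝓝 (cexp w)) := by
  rw [Metric.tendsto_nhds]
  intro ε hε
  obtain ⟨δ, hδ, hexp⟩ := Metric.continuousAt_iff.1 Complex.continuous_exp.continuousAt ε hε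
  filter_upwards [hf, hb.eventually (gt_mem_nhds hδ)] with x ⟨R, hR, hfx⟩ hbx
  rw [hfx]
  exact hexp (by rw [dist_eq_norm, add_sub_cancel_left]; linarith)

section GeometricBounds

variable {t : ℝ}

lemma natCast_mul_pow_le_inv_one_sub (h0 : 0 ≤ t) (h1 : t < 1) (k : ℕ) :
    k * t ^ k ≤ (1 - t)⁻¹ :=
  calc (k : ℝ) * t ^ k = ∑ _j ∈ Finset.range k, t ^ k := by simp
    _ ≤ ∑ j ∈ Finset.range k, t ^ j :=
        Finset.sum_le_sum fun j hj ↦ pow_le_pow_of_le_one h0 h1.le (Finset.mem_range.1 hj).le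
    _ ≤ ∑' j, t ^ j :=
        Summable.sum_le_tsum _ (fun j _ ↦ pow_nonneg h0 j) (summable_geometric_of_lt_one h0 h1)
    _ = (1 - t)⁻¹ := tsum_geometric_of_lt_one h0 h1

lemma summable_natCast_pow_mul_pow (h0 : 0 ≤ t) (h1 : t < 1) (j : ℕ) :
    Summable fun k : ℕ ↦ (k : ℝ) ^ j * t ^ k :=
  summable_pow_mul_geometric_of_norm_lt_one j (by rwa [Real.norm_of_nonneg h0])

lemma summable_natCast_pow_mul_pow_div_one_add_pow_pow (h0 : 0 ≤ t) (h1 : t < 1) (j n : ℕ) :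
    Summable fun k : ℕ ↦ (k : ℝ) ^ j * t ^ k / (1 + t ^ k) ^ n :=
  (summable_natCast_pow_mul_pow h0 h1 j).of_nonneg_of_le (fun k ↦ by positivity)
    fun k ↦ div_le_self (by positivity) (one_le_pow₀ (by linarith [pow_nonneg h0 k]))

lemma tsum_natCast_pow_three_mul_pow_le (h0 : 0 ≤ t) (h1 : t < 1) :
    ∑' k : ℕ, (k : ℝ) ^ 3 * t ^ k ≤ 6 / (1 - t) ^ 4 := by
  have ht : ‖t‖ < 1 := by rwa [Real.norm_of_nonneg h0]
  have hcube : ∀ k : ℕ, (k : ℝ) ^ 3 ≤ 6 * ((k + 3).choose 3 : ℕ) := fun k ↦ by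
    have h := Nat.descFactorial_eq_factorial_mul_choose (k + 3) 3
    norm_num [Nat.descFactorial, Nat.factorial, show k + 3 - 2 = k + 1 by omega] at h
    have : k ^ 3 ≤ 6 * (k + 3).choose 3 := by nlinarith
    exact_mod_cast this
  calc ∑' k : ℕ, (k : ℝ) ^ 3 * t ^ k
      ≤ ∑' k : ℕ, 6 * (((k + 3).choose 3 : ℕ) * t ^ k) :=
        Summable.tsum_le_tsum (fun k ↦ by rw [← mul_assoc]; gcongr; exact hcube k)
          (summable_natCast_pow_mul_pow h0 h1 3)
          ((summable_choose_mul_geometric_of_norm_lt_one 3 ht).mul_left 6)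
    _ = 6 / (1 - t) ^ 4 := by
        rw [tsum_mul_left, tsum_choose_mul_geometric_of_norm_lt_one 3 ht]; ring

lemma inv_sixteen_mul_one_sub_pow_three_le_tsum (h0 : 1 / 2 ≤ t) (h1 : t < 1) :
    (16 * (1 - t) ^ 3)⁻¹ ≤ ∑' k : ℕ, (k : ℝ) ^ 2 * t ^ k / (1 + t ^ k) ^ 2 := by
  have ht0 : 0 ≤ t := by linarith
  have ht : ‖t‖ < 1 := by rwa [Real.norm_of_nonneg ht0]
  have hsq : ∀ k : ℕ, ((k + 2).choose 2 : ℕ) - 1 ≤ 3 * (k : ℝ) ^ 2 := fun k ↦ by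
    have h := Nat.descFactorial_eq_factorial_mul_choose (k + 2) 2
    norm_num [Nat.descFactorial, Nat.factorial] at h
    have : (k + 2).choose 2 ≤ 3 * k ^ 2 + 1 := by nlinarith
    have : (((k + 2).choose 2 : ℕ) : ℝ) ≤ 3 * k ^ 2 + 1 := by exact_mod_cast this
    linarith
  have hlow : HasSum (fun k : ℕ ↦ ((((k + 2).choose 2 : ℕ) * t ^ k) - t ^ k) / 12)
      ((1 / (1 - t) ^ 3 - (1 - t)⁻¹) / 12) :=
    ((hasSum_choose_mul_geometric_of_norm_lt_one 2 ht).sub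
      (hasSum_geometric_of_lt_one ht0 h1)).div_const 12
  have hterm : ∀ k : ℕ, ((((k + 2).choose 2 : ℕ) * t ^ k) - t ^ k) / 12
      ≤ (k : ℝ) ^ 2 * t ^ k / (1 + t ^ k) ^ 2 := fun k ↦ by
    have htk : 0 ≤ t ^ k := pow_nonneg ht0 k
    have hden : (1 + t ^ k) ^ 2 ≤ 4 := by nlinarith [pow_le_one₀ ht0 h1.le (n := k)]
    rw [le_div_iff₀ (by positivity)]
    nlinarith [mul_le_mul_of_nonneg_left (hsq k) htk, mul_nonneg (sq_nonneg (k : ℝ)) htk]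
  have h1t : 0 < 1 - t := by linarith
  calc (16 * (1 - t) ^ 3)⁻¹ ≤ (1 / (1 - t) ^ 3 - (1 - t)⁻¹) / 12 := by
        field_simp
        nlinarith
    _ ≤ _ := hlow.tsum_eq ▸ Summable.tsum_le_tsum hterm hlow.summable
      (summable_natCast_pow_mul_pow_div_one_add_pow_pow ht0 h1 2 2)

end GeometricBounds

/-- The probability that `k` is a part under the law `n ↦ q(n)tⁿ/f(t)`. -/
noncomputable def distinctPartProb (t : ℝ) (k : ℕ) : ℝ :=
  t ^ k / (1 + t ^ k)

section distinctPartProb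

variable {t : ℝ}

lemma distinctPartProb_nonneg (ht : 0 ≤ t) (k : ℕ) : 0 ≤ distinctPartProb t k := by
  unfold distinctPartProb; positivity

lemma distinctPartProb_le_pow (ht : 0 ≤ t) (k : ℕ) : distinctPartProb t k ≤ t ^ k :=
  div_le_self (by positivity) (by linarith [pow_nonneg ht k])

lemma distinctPartProb_le_one (ht : 0 ≤ t) (k : ℕ) : distinctPartProb t k ≤ 1 :=
  (div_le_one (by positivity)).2 (by linarith)

lemma phiQ_eq_cexp_mul_tprod (ht : 0 ≤ t) (θ : ℝ) :
    phiQ t θ = cexp (-I * ((θ / sigmaQ t * meanQ t : ℝ) : ℂ)) * ∏' k : ℕ,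
      (1 + distinctPartProb t k * (cexp (I * ((k * (θ / sigmaQ t) : ℝ) : ℂ)) - 1)) := by
  unfold phiQ distinctPartProb
  congr 1
  · congr 1; push_cast; ring
  · refine tprod_congr fun k ↦ ?_
    have : (1 + (t : ℂ) ^ k) ≠ 0 := by exact_mod_cast (by positivity : 0 < 1 + t ^ k).ne'
    push_cast; field_simp; ring

lemma distinctPartProb_mul_abs_le (h0 : 0 ≤ t) (h1 : t < 1) {u : ℝ} (hu : |u| ≤ (1 - t) / 2)
    (k : ℕ) : distinctPartProb t k * |k * u| ≤ 1 / 2 :=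
  calc distinctPartProb t k * |k * u| ≤ t ^ k * (k * |u|) := by
        rw [abs_mul, Nat.abs_cast]; gcongr; exact distinctPartProb_le_pow h0 k
    _ = (k * t ^ k) * |u| := by ring
    _ ≤ (1 - t)⁻¹ * ((1 - t) / 2) := by
        gcongr; exact natCast_mul_pow_le_inv_one_sub h0 h1 k
    _ = 1 / 2 := by field_simp [(by linarith : (1 - t) ≠ 0)]

lemma distinctPartProb_mul_abs_pow_three_le (h0 : 0 ≤ t) (u : ℝ) (k : ℕ) :
    distinctPartProb t k * |k * u| ^ 3 ≤ |u| ^ 3 * (k ^ 3 * t ^ k) := by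
  rw [abs_mul, Nat.abs_cast]
  calc distinctPartProb t k * (k * |u|) ^ 3 ≤ t ^ k * (k * |u|) ^ 3 := by
        have := distinctPartProb_le_pow h0 k; gcongr
    _ = |u| ^ 3 * (k ^ 3 * t ^ k) := by ring

lemma exists_hasProd_one_add_distinctPartProb_mul (h0 : 0 ≤ t) (h1 : t < 1) {u : ℝ}
    (hu : |u| ≤ (1 - t) / 2) :
    ∃ R : ℂ, ‖R‖ ≤ 36 * |u| ^ 3 / (1 - t) ^ 4 ∧
      HasProd (fun k : ℕ ↦ 1 + distinctPartProb t k * (cexp (I * ((k * u : ℝ) : ℂ)) - 1))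
        (cexp (I * ((u * meanQ t : ℝ) : ℂ) -
          ((u ^ 2 * sigmaQ t ^ 2 : ℝ) : ℂ) / 2 + R)) := by
  set a := distinctPartProb t
  have hmean : ∀ k : ℕ, a k * (k * u) = u * (k ^ 1 * t ^ k / (1 + t ^ k) ^ 1) := fun k ↦ by
    simp only [a, distinctPartProb]; ring
  have hsq : ∀ k : ℕ, a k * (k * u) ^ 2 = u ^ 2 * (k ^ 2 * t ^ k / (1 + t ^ k) ^ 1) :=
    fun k ↦ by simp only [a, distinctPartProb]; ring
  have hvar : ∀ k : ℕ,
      (a k - a k ^ 2) * (k * u) ^ 2 = u ^ 2 * (k ^ 2 * t ^ k / (1 + t ^ k) ^ 2) := fun k ↦ by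
      have : 0 < 1 + t ^ k := by positivity
      simp only [a, distinctPartProb]; field_simp; ring
  have hmean_sum : Summable fun k : ℕ ↦ a k * (k * u) := by
    simp_rw [hmean]; exact (summable_natCast_pow_mul_pow_div_one_add_pow_pow h0 h1 1 1).mul_left _
  have hsq_sum : Summable fun k : ℕ ↦ a k * (k * u) ^ 2 := by
    simp_rw [hsq]; exact (summable_natCast_pow_mul_pow_div_one_add_pow_pow h0 h1 2 1).mul_left _
  have hbound_sum := (summable_natCast_pow_mul_pow h0 h1 3).mul_left (|u| ^ 3)
  have hcube_sum : Summable fun k : ℕ ↦ a k * |k * u| ^ 3 :=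
    hbound_sum.of_nonneg_of_le (fun k ↦ mul_nonneg (distinctPartProb_nonneg h0 k) (by positivity))
      (distinctPartProb_mul_abs_pow_three_le h0 u)
  obtain ⟨R, hR, hprod⟩ := hasProd_one_add_mul_cexp_sub_one (distinctPartProb_nonneg h0)
    (distinctPartProb_le_one h0) (distinctPartProb_mul_abs_le h0 h1 hu) hmean_sum hsq_sum hcube_sum
  refine ⟨R, ?_, ?_⟩
  · calc ‖R‖ ≤ 6 * ∑' k : ℕ, a k * |k * u| ^ 3 := hR
      _ ≤ 6 * (|u| ^ 3 * ∑' k : ℕ, (k : ℝ) ^ 3 * t ^ k) := by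
          gcongr
          exact (Summable.tsum_le_tsum (distinctPartProb_mul_abs_pow_three_le h0 u) hcube_sum
            hbound_sum).trans_eq tsum_mul_left
      _ ≤ 6 * (|u| ^ 3 * (6 / (1 - t) ^ 4)) := by
          gcongr; exact tsum_natCast_pow_three_mul_pow_le h0 h1
      _ = 36 * |u| ^ 3 / (1 - t) ^ 4 := by ring
  · have hm : ∑' k : ℕ, a k * (k * u) = u * meanQ t := by
      simp_rw [hmean, pow_one]; exact tsum_mul_left
    have hS : ∑' k : ℕ, (a k - a k ^ 2) * (k * u) ^ 2 = u ^ 2 * sigmaQ t ^ 2 := by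
      simp_rw [hvar]
      rw [tsum_mul_left, sigmaQ, Real.sq_sqrt (tsum_nonneg fun k ↦ by positivity)]
    rwa [hm, hS] at hprod

end distinctPartProb

lemma sigmaQ_pos {t : ℝ} (h0 : 0 < t) (h1 : t < 1) : 0 < sigmaQ t := by
  refine Real.sqrt_pos.2 (Summable.tsum_pos ?_ (fun k ↦ by positivity) 1 (by positivity))
  exact summable_natCast_pow_mul_pow_div_one_add_pow_pow h0.le h1 2 2

lemma abs_div_sigmaQ_le {t : ℝ} (h0 : 1 / 2 ≤ t) (h1 : t < 1) (θ : ℝ) :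
    |θ / sigmaQ t| ≤ 4 * |θ| * ((1 - t) * √(1 - t)) := by
  have h1t : 0 < 1 - t := by linarith
  have hc : 0 < 4 * ((1 - t) * √(1 - t)) := by positivity
  have hσ : (4 * ((1 - t) * √(1 - t)))⁻¹ ≤ sigmaQ t := by
    refine Real.le_sqrt_of_sq_le
      ((le_of_eq ?_).trans (inv_sixteen_mul_one_sub_pow_three_le_tsum h0 h1))
    rw [inv_pow, mul_pow, mul_pow, Real.sq_sqrt h1t.le]; ring
  calc |θ / sigmaQ t| = |θ| / sigmaQ t := by
        rw [abs_div, abs_of_pos (sigmaQ_pos (by linarith) h1)]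
    _ ≤ |θ| / (4 * ((1 - t) * √(1 - t)))⁻¹ :=
        div_le_div_of_nonneg_left (abs_nonneg θ) (inv_pos.2 hc) hσ
    _ = 4 * |θ| * ((1 - t) * √(1 - t)) := by rw [div_inv_eq_mul]; ring

lemma exists_phiQ_eq_cexp {t θ : ℝ} (h0 : 0 < t) (h1 : t < 1)
    (hθ : |θ / sigmaQ t| ≤ (1 - t) / 2) :
    ∃ R : ℂ, ‖R‖ ≤ 36 * |θ / sigmaQ t| ^ 3 / (1 - t) ^ 4 ∧
      phiQ t θ = cexp ((-θ ^ 2 / 2 : ℝ) + R) := by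
  obtain ⟨R, hR, hprod⟩ := exists_hasProd_one_add_distinctPartProb_mul h0.le h1 hθ
  refine ⟨R, hR, ?_⟩
  have hσ : (sigmaQ t : ℂ) ≠ 0 := by exact_mod_cast (sigmaQ_pos h0 h1).ne'
  rw [phiQ_eq_cexp_mul_tprod h0.le, hprod.tprod_eq, ← Complex.exp_add]
  congr 1
  push_cast
  field_simp
  ring

/-- Pointwise convergence of the characteristic function of `Z_t` to the Gaussian one:
for every `θ ∈ ℝ`, `φ_t(θ) → e^{−θ²/2}` as `t → 1⁻`. -/
theorem charFun_restricted_partitions_tendsto_gaussian (θ : ℝ) :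
    Tendsto (fun t : ℝ => phiQ t θ) (𝓝[<] (1 : ℝ))
      (𝓝 ((Real.exp (-θ ^ 2 / 2) : ℝ) : ℂ)) := by
  have hs : Tendsto (fun t : ℝ ↦ √(1 - t)) (𝓝[<] 1) (𝓝 0) := by
    have : ContinuousAt (fun t : ℝ ↦ √(1 - t)) 1 := by fun_prop
    simpa using this.tendsto.mono_left nhdsWithin_le_nhds
  rw [Complex.ofReal_exp]
  refine tendsto_cexp_of_eventually_eq_cexp_add (b := fun t ↦ 2304 * |θ| ^ 3 * √(1 - t))
    (by simpa using hs.const_mul (2304 * |θ| ^ 3)) ?_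
  filter_upwards [Ioo_mem_nhdsLT (show (1 / 2 : ℝ) < 1 by norm_num),
    hs.eventually (gt_mem_nhds (show (0 : ℝ) < (8 * |θ| + 1)⁻¹ by positivity))]
    with t ⟨ht0, ht1⟩ hst
  have hsmall : (8 * |θ| + 1) * √(1 - t) < 1 := by
    simpa [mul_inv_cancel₀ (by positivity : 8 * |θ| + 1 ≠ 0)] using
      mul_lt_mul_of_pos_left hst (by positivity : 0 < 8 * |θ| + 1)
  have hu := abs_div_sigmaQ_le ht0.le ht1 θ
  obtain ⟨R, hR, hphi⟩ := exists_phiQ_eq_cexp (by linarith) ht1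
    (hu.trans (by nlinarith [Real.sqrt_nonneg (1 - t)]))
  refine ⟨R, hR.trans ?_, hphi⟩
  calc 36 * |θ / sigmaQ t| ^ 3 / (1 - t) ^ 4
      ≤ 36 * (4 * |θ| * ((1 - t) * √(1 - t))) ^ 3 / (1 - t) ^ 4 := by gcongr
    _ = 2304 * |θ| ^ 3 * √(1 - t) := by
        rw [mul_pow, mul_pow, mul_pow, pow_succ √(1 - t) 2, Real.sq_sqrt (by linarith)]
        field_simp
        ring
end

section
/- As ρ → 0⁺, one has ∑_{k=1}^{∞} ln(1 + e^{−ρ k}) = π²/(12 ρ) − (1/2) ln 2 + O(ρ). -/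
/-! With `f x = log (1 + exp (-ρ * x))` one has `∫₀^∞ f = π² / (12ρ)`: expand
`log (1 + y) = ∑ (yⁿ - y²ⁿ) / n`, integrate termwise and use `ζ(2) = π² / 6`.
The sum `∑_{k ≥ 1} f k` is the midpoint rule for `∫_{1/2}^∞ f`. The second differences of `f`
satisfy `0 ≤ f (c + s) + f (c - s) - 2 f c ≤ ρ² s² exp (-ρ (c - 1/2))` for `0 ≤ s ≤ 1/2`, so the
error on the cell around `k` lies in `[0, ρ² exp (-ρ (k - 1/2)) / 24]`, and these bounds sum to
`ρ² / (48 sinh (ρ/2)) ≤ ρ / 24`. Finally `(log 2) / 2 - ρ / 16 ≤ ∫₀^{1/2} f ≤ (log 2) / 2`. -/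

open Filter Real MeasureTheory Set

-- Unlike the alternating series, this one integrates termwise at `x = exp (-c t)` to `ζ(2) / 2c`.
theorem hasSum_log_one_add_of_abs_lt_one {x : ℝ} (hx : |x| < 1) :
    HasSum (fun n : ℕ => (x ^ (n + 1) - (x ^ 2) ^ (n + 1)) / (n + 1)) (log (1 + x)) := by
  have hx2 : |x ^ 2| < 1 := by
    rw [abs_pow]; exact pow_lt_one₀ (abs_nonneg x) hx two_ne_zero
  obtain ⟨hx₁, hx₂⟩ := abs_lt.mp hx
  have hlog : -log (1 - x) - -log (1 - x ^ 2) = log (1 + x) := by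
    rw [show 1 - x ^ 2 = (1 - x) * (1 + x) by ring, log_mul (by linarith) (by linarith)]
    ring
  simpa only [sub_div, hlog] using
    (hasSum_pow_div_log_of_abs_lt_one hx).sub (hasSum_pow_div_log_of_abs_lt_one hx2)

theorem integral_exp_neg_mul_Ioi_zero {b : ℝ} (hb : 0 < b) :
    ∫ x in Ioi 0, exp (-b * x) = b⁻¹ := by
  rw [integral_exp_mul_Ioi (neg_neg_iff_pos.mpr hb)]
  simp

theorem two_mul_cosh_sub_two_le {a : ℝ} (ha : 0 ≤ a) : 2 * cosh a - 2 ≤ a ^ 2 * exp a := by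
  have hw : 0 < exp a := exp_pos a
  have hsq : 2 * cosh a - 2 = (exp a - 1) ^ 2 / exp a := by
    rw [cosh_eq, exp_neg]; field_simp; ring
  have hlin : exp a - 1 ≤ a * exp a := by
    have := mul_le_mul_of_nonneg_right (add_one_le_exp (-a)) hw.le
    rw [← exp_add, neg_add_cancel, exp_zero] at this
    linarith
  have h1 : 0 ≤ exp a - 1 := by linarith [add_one_le_exp a]
  rw [hsq, div_le_iff₀ hw]
  nlinarith [pow_le_pow_left₀ h1 hlin 2]

theorem hasSum_exp_neg_mul_add_half {ρ : ℝ} (hρ : 0 < ρ) :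
    HasSum (fun k : ℕ => exp (-ρ * (k + 1 / 2))) (2 * sinh (ρ / 2))⁻¹ := by
  have hr : exp (-ρ) < 1 := exp_lt_one_iff.mpr (by linarith)
  have hgeom := (hasSum_geometric_of_lt_one (exp_pos _).le hr).mul_left (exp (-ρ / 2))
  have hsinh : 2 * sinh (ρ / 2) = (exp (-ρ / 2))⁻¹ * (1 - exp (-ρ)) := by
    rw [sinh_eq, ← exp_neg, mul_sub, ← exp_add, show -ρ / 2 = -(ρ / 2) by ring, neg_neg]
    ring_nf
  rw [hsinh, mul_inv, inv_inv]
  refine hgeom.congr_fun fun k => ?_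
  rw [← exp_nat_mul, ← exp_add]
  ring_nf

theorem integral_Ioi_eq_intervalIntegral_add {f : ℝ → ℝ} {a b : ℝ} (hab : a ≤ b)
    (hf : IntegrableOn f (Ioi a)) :
    ∫ x in Ioi a, f x = (∫ x in a..b, f x) + ∫ x in Ioi b, f x := by
  rw [intervalIntegral.integral_of_le hab, ← setIntegral_union (Ioc_disjoint_Ioi le_rfl)
    measurableSet_Ioi (hf.mono_set Ioc_subset_Ioi_self) (hf.mono_set (Ioi_subset_Ioi hab)),
    Ioc_union_Ioi_eq_Ioi hab]

theorem hasSum_intervalIntegral_add_nat {f : ℝ → ℝ} {a : ℝ} (hf : IntegrableOn f (Ioi a))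
    (hf₀ : ∀ x ∈ Ioi a, 0 ≤ f x) :
    HasSum (fun k : ℕ => ∫ x in (a + k)..(a + k + 1), f x) (∫ x in Ioi a, f x) := by
  have hcell : ∀ k : ℕ, IntervalIntegrable f volume (a + k) (a + (k + 1 : ℕ)) := fun k =>
    (intervalIntegrable_iff_integrableOn_Ioc_of_le (by simp)).mpr
      (hf.mono_set (Ioc_subset_Ioi_self.trans (Ioi_subset_Ioi (by simp))))
  have hpart : ∀ N : ℕ, ∑ k ∈ Finset.range N, ∫ x in (a + k)..(a + k + 1), f x =
      ∫ x in a..(a + N), f x := by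
    intro N
    simpa [add_assoc] using intervalIntegral.sum_integral_adjacent_intervals
      (a := fun k : ℕ => a + k) (n := N) (μ := volume) fun k _ => hcell k
  refine (hasSum_iff_tendsto_nat_of_nonneg (fun k => ?_) _).mpr ?_
  · rw [intervalIntegral.integral_of_le (by linarith)]
    exact setIntegral_nonneg measurableSet_Ioc fun x hx =>
      hf₀ x (lt_of_le_of_lt (by simp) hx.1)
  · simpa only [hpart] using intervalIntegral_tendsto_integral_Ioi a hf
      (tendsto_atTop_add_const_left _ _ tendsto_natCast_atTop_atTop)

section MidpointRule

variable {g : ℝ → ℝ} {h : ℝ}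

theorem integral_sub_two_mul_midpoint_eq (hg : Continuous g) (c : ℝ) :
    (∫ x in (c - h)..(c + h), g x) - 2 * h * g c =
      ∫ s in 0..h, (g (c + s) + g (c - s) - 2 * g c) := by
  have hleft : ∫ s in 0..h, g (c - s) = ∫ x in (c - h)..c, g x := by
    simp [intervalIntegral.integral_comp_sub_left g c]
  have hright : ∫ s in 0..h, g (c + s) = ∫ x in c..(c + h), g x := by
    simp [intervalIntegral.integral_comp_add_left g c]
  rw [intervalIntegral.integral_sub ((by fun_prop : Continuous _).intervalIntegrable _ _)
      intervalIntegrable_const,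
    intervalIntegral.integral_add ((by fun_prop : Continuous _).intervalIntegrable _ _)
      ((by fun_prop : Continuous _).intervalIntegrable _ _), hleft, hright,
    ← intervalIntegral.integral_add_adjacent_intervals (hg.intervalIntegrable _ _)
      (hg.intervalIntegrable _ _), intervalIntegral.integral_const, smul_eq_mul]
  ring

theorem two_mul_midpoint_le_integral (hg : Continuous g) (c : ℝ) (hh : 0 ≤ h)
    (hconv : ∀ s ∈ Icc 0 h, 2 * g c ≤ g (c + s) + g (c - s)) :
    2 * h * g c ≤ ∫ x in (c - h)..(c + h), g x := by
  have := integral_sub_two_mul_midpoint_eq hg c (h := h)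
  have : 0 ≤ ∫ s in 0..h, (g (c + s) + g (c - s) - 2 * g c) :=
    intervalIntegral.integral_nonneg hh fun s hs => sub_nonneg.mpr (hconv s hs)
  linarith

theorem integral_sub_two_mul_midpoint_le (hg : Continuous g) (c : ℝ) (hh : 0 ≤ h) {K : ℝ}
    (hK : ∀ s ∈ Icc 0 h, g (c + s) + g (c - s) - 2 * g c ≤ K * s ^ 2) :
    (∫ x in (c - h)..(c + h), g x) - 2 * h * g c ≤ K * h ^ 3 / 3 := by
  rw [integral_sub_two_mul_midpoint_eq hg]
  calc ∫ s in 0..h, (g (c + s) + g (c - s) - 2 * g c)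
      ≤ ∫ s in 0..h, K * s ^ 2 :=
        intervalIntegral.integral_mono_on hh
          ((by fun_prop : Continuous _).intervalIntegrable _ _)
          ((by fun_prop : Continuous _).intervalIntegrable _ _) hK
    _ = K * h ^ 3 / 3 := by simp [integral_pow]; ring

end MidpointRule

theorem continuous_log_one_add_exp_neg_mul (ρ : ℝ) :
    Continuous fun x => log (1 + exp (-ρ * x)) :=
  Continuous.log (by fun_prop) fun x => by positivity

theorem log_one_add_exp_neg_mul_nonneg (ρ x : ℝ) : 0 ≤ log (1 + exp (-ρ * x)) :=
  log_nonneg (by linarith [exp_pos (-ρ * x)])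

theorem log_one_add_exp_neg_mul_le_exp (ρ x : ℝ) :
    log (1 + exp (-ρ * x)) ≤ exp (-ρ * x) := by
  linarith [log_le_sub_one_of_pos (by positivity : 0 < 1 + exp (-ρ * x))]

theorem log_one_add_exp_neg_mul_le_log_two {ρ x : ℝ} (hρx : 0 ≤ ρ * x) :
    log (1 + exp (-ρ * x)) ≤ log 2 :=
  log_le_log (by positivity) (by linarith [exp_le_one_iff.mpr (by linarith : -ρ * x ≤ 0)])

theorem log_two_sub_le_log_one_add_exp_neg_mul (ρ x : ℝ) :
    log 2 - ρ * x / 2 ≤ log (1 + exp (-ρ * x)) := by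
  have hsq : exp (-ρ * x) = exp (-ρ * x / 2) ^ 2 := by rw [← exp_nat_mul]; ring_nf
  have hamgm : 2 * exp (-ρ * x / 2) ≤ 1 + exp (-ρ * x) := by
    rw [hsq]; nlinarith [sq_nonneg (1 - exp (-ρ * x / 2))]
  have := log_le_log (by positivity) hamgm
  rw [log_mul two_ne_zero (exp_pos _).ne', log_exp] at this
  linarith

theorem integrableOn_log_one_add_exp_neg_mul_Ioi {ρ : ℝ} (hρ : 0 < ρ) (a : ℝ) :
    IntegrableOn (fun x => log (1 + exp (-ρ * x))) (Ioi a) :=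
  (exp_neg_integrableOn_Ioi a hρ).mono'
    (continuous_log_one_add_exp_neg_mul ρ).aestronglyMeasurable
    (Eventually.of_forall fun x => by
      rw [norm_of_nonneg (log_one_add_exp_neg_mul_nonneg ρ x)]
      exact log_one_add_exp_neg_mul_le_exp ρ x)

theorem integral_log_one_add_exp_neg_mul_Ioi {c : ℝ} (hc : 0 < c) :
    ∫ x in Ioi 0, log (1 + exp (-c * x)) = π ^ 2 / (12 * c) := by
  set F : ℕ → ℝ → ℝ := fun n x =>
    (exp (-(c * (n + 1)) * x) - exp (-(2 * c * (n + 1)) * x)) / (n + 1)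
  have hpos : ∀ n : ℕ, 0 < c * (n + 1) := fun n => by positivity
  have hpos₂ : ∀ n : ℕ, 0 < 2 * c * (n + 1) := fun n => by positivity
  have hint : ∀ n, IntegrableOn (F n) (Ioi 0) := fun n =>
    ((exp_neg_integrableOn_Ioi 0 (hpos n)).sub (exp_neg_integrableOn_Ioi 0 (hpos₂ n))).div_const _
  have hval : ∀ n : ℕ, ∫ x in Ioi 0, F n x = 1 / (2 * c) * (1 / ((n : ℝ) + 1) ^ 2) := by
    intro n
    rw [integral_div, integral_sub (exp_neg_integrableOn_Ioi 0 (hpos n))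
      (exp_neg_integrableOn_Ioi 0 (hpos₂ n)),
      integral_exp_neg_mul_Ioi_zero (hpos n), integral_exp_neg_mul_Ioi_zero (hpos₂ n)]
    field_simp
    ring
  have hnorm : ∀ n : ℕ, ∫ x in Ioi 0, ‖F n x‖ = ∫ x in Ioi 0, F n x := by
    refine fun n => setIntegral_congr_fun measurableSet_Ioi fun x hx => norm_of_nonneg ?_
    refine div_nonneg (sub_nonneg.mpr (exp_le_exp.mpr ?_)) (by positivity)
    nlinarith [mem_Ioi.mp hx, hpos n]
  have hzeta : HasSum (fun n : ℕ => 1 / ((n : ℝ) + 1) ^ 2) (π ^ 2 / 6) := by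
    simpa using (hasSum_nat_add_iff' 1).mpr hasSum_zeta_two
  have hseries : HasSum (fun n => ∫ x in Ioi 0, F n x) (π ^ 2 / (12 * c)) := by
    have := hzeta.mul_left (1 / (2 * c))
    rw [show 1 / (2 * c) * (π ^ 2 / 6) = π ^ 2 / (12 * c) by field_simp; ring] at this
    exact this.congr_fun hval
  have hsum := hasSum_integral_of_summable_integral_norm hint
    (by simpa only [hnorm] using hseries.summable)
  rw [hseries.unique hsum]
  refine setIntegral_congr_fun measurableSet_Ioi fun x hx => ?_
  have hx' : |exp (-c * x)| < 1 := by
    rw [abs_of_pos (exp_pos _), exp_lt_one_iff]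
    nlinarith [mem_Ioi.mp hx]
  refine ((hasSum_log_one_add_of_abs_lt_one hx').congr_fun fun n => ?_).tsum_eq.symm
  simp only [F, ← exp_nat_mul]
  push_cast
  ring_nf

theorem intervalIntegral_log_one_add_exp_neg_mul_le {ρ : ℝ} (hρ : 0 ≤ ρ) :
    ∫ x in (0 : ℝ)..1 / 2, log (1 + exp (-ρ * x)) ≤ log 2 / 2 := by
  have := intervalIntegral.integral_mono_on (μ := volume) (by norm_num : (0 : ℝ) ≤ 1 / 2)
    ((continuous_log_one_add_exp_neg_mul ρ).intervalIntegrable _ _)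
    (continuous_const.intervalIntegrable _ _)
    fun x hx => log_one_add_exp_neg_mul_le_log_two (mul_nonneg hρ hx.1)
  simpa [div_eq_inv_mul] using this

theorem log_two_div_two_sub_le_intervalIntegral_log_one_add_exp_neg_mul (ρ : ℝ) :
    log 2 / 2 - ρ / 16 ≤ ∫ x in (0 : ℝ)..1 / 2, log (1 + exp (-ρ * x)) := by
  have := intervalIntegral.integral_mono_on (μ := volume) (by norm_num : (0 : ℝ) ≤ 1 / 2)
    ((by fun_prop : Continuous fun x => log 2 - ρ * x / 2).intervalIntegrable _ _)
    ((continuous_log_one_add_exp_neg_mul ρ).intervalIntegrable _ _)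
    fun x _ => log_two_sub_le_log_one_add_exp_neg_mul ρ x
  rw [intervalIntegral.integral_sub (continuous_const.intervalIntegrable _ _)
    ((by fun_prop : Continuous fun x => ρ * x / 2).intervalIntegrable _ _),
    intervalIntegral.integral_div, intervalIntegral.integral_const_mul, integral_id] at this
  norm_num at this ⊢
  linarith

theorem log_one_add_exp_neg_mul_second_diff_eq (ρ c s : ℝ) :
    log (1 + exp (-ρ * (c + s))) + log (1 + exp (-ρ * (c - s))) - 2 * log (1 + exp (-ρ * c)) =
      log (1 + exp (-ρ * c) * (2 * cosh (ρ * s) - 2) / (1 + exp (-ρ * c)) ^ 2) := by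
  have hprod : (1 + exp (-ρ * (c + s))) * (1 + exp (-ρ * (c - s))) =
      (1 + exp (-ρ * c)) ^ 2 + exp (-ρ * c) * (2 * cosh (ρ * s) - 2) := by
    have hinv : exp (-(ρ * s)) * exp (ρ * s) = 1 := by rw [← exp_add, neg_add_cancel, exp_zero]
    rw [cosh_eq, show -ρ * (c + s) = -ρ * c + -(ρ * s) by ring,
      show -ρ * (c - s) = -ρ * c + ρ * s by ring, exp_add, exp_add]
    linear_combination exp (-ρ * c) ^ 2 * hinv
  have hQ : 0 < (1 + exp (-ρ * c)) ^ 2 := by positivity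
  have hX : 0 ≤ exp (-ρ * c) * (2 * cosh (ρ * s) - 2) :=
    mul_nonneg (exp_pos _).le (by linarith [one_le_cosh (ρ * s)])
  rw [← log_mul (by positivity) (by positivity), hprod, one_add_div hQ.ne',
    log_div (add_pos_of_pos_of_nonneg hQ hX).ne' hQ.ne', log_pow]
  push_cast
  ring

theorem log_one_add_exp_neg_mul_second_diff_nonneg (ρ c s : ℝ) :
    0 ≤ log (1 + exp (-ρ * (c + s))) + log (1 + exp (-ρ * (c - s))) -
      2 * log (1 + exp (-ρ * c)) := by
  have hX : 0 ≤ exp (-ρ * c) * (2 * cosh (ρ * s) - 2) :=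
    mul_nonneg (exp_pos _).le (by linarith [one_le_cosh (ρ * s)])
  rw [log_one_add_exp_neg_mul_second_diff_eq]
  exact log_nonneg (le_add_of_nonneg_right (div_nonneg hX (sq_nonneg _)))

theorem log_one_add_exp_neg_mul_second_diff_le (ρ c s : ℝ) :
    log (1 + exp (-ρ * (c + s))) + log (1 + exp (-ρ * (c - s))) - 2 * log (1 + exp (-ρ * c)) ≤
      exp (-ρ * c) * (2 * cosh (ρ * s) - 2) := by
  have hX : 0 ≤ exp (-ρ * c) * (2 * cosh (ρ * s) - 2) :=
    mul_nonneg (exp_pos _).le (by linarith [one_le_cosh (ρ * s)])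
  have hY := div_nonneg hX (sq_nonneg (1 + exp (-ρ * c)))
  rw [log_one_add_exp_neg_mul_second_diff_eq]
  calc _ ≤ exp (-ρ * c) * (2 * cosh (ρ * s) - 2) / (1 + exp (-ρ * c)) ^ 2 := by
        linarith [log_le_sub_one_of_pos (add_pos_of_pos_of_nonneg one_pos hY)]
    _ ≤ _ := div_le_self hX (one_le_pow₀ (by linarith [exp_pos (-ρ * c)]))

theorem log_one_add_exp_neg_mul_le_integral (ρ c : ℝ) :
    log (1 + exp (-ρ * c)) ≤ ∫ x in (c - 1 / 2)..(c + 1 / 2), log (1 + exp (-ρ * x)) := by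
  have := two_mul_midpoint_le_integral (continuous_log_one_add_exp_neg_mul ρ) c
    (h := 1 / 2) (by norm_num) fun s _ => by
      linarith [log_one_add_exp_neg_mul_second_diff_nonneg ρ c s]
  linarith

theorem integral_log_one_add_exp_neg_mul_sub_le {ρ : ℝ} (hρ : 0 ≤ ρ) (c : ℝ) :
    (∫ x in (c - 1 / 2)..(c + 1 / 2), log (1 + exp (-ρ * x))) - log (1 + exp (-ρ * c)) ≤
      ρ ^ 2 / 24 * exp (-ρ * (c - 1 / 2)) := by
  have := integral_sub_two_mul_midpoint_le (continuous_log_one_add_exp_neg_mul ρ) c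
    (h := 1 / 2) (by norm_num) (K := ρ ^ 2 * exp (-ρ * (c - 1 / 2))) fun s hs => by
      have hexp : exp (-ρ * c) * exp (ρ * s) ≤ exp (-ρ * (c - 1 / 2)) := by
        rw [← exp_add]; exact exp_le_exp.mpr (by nlinarith [hs.2])
      calc _ ≤ exp (-ρ * c) * (2 * cosh (ρ * s) - 2) :=
            log_one_add_exp_neg_mul_second_diff_le ρ c s
        _ ≤ exp (-ρ * c) * ((ρ * s) ^ 2 * exp (ρ * s)) := by
            gcongr; exact two_mul_cosh_sub_two_le (mul_nonneg hρ hs.1)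
        _ = ρ ^ 2 * s ^ 2 * (exp (-ρ * c) * exp (ρ * s)) := by ring
        _ ≤ ρ ^ 2 * s ^ 2 * exp (-ρ * (c - 1 / 2)) := by gcongr
        _ = _ := by ring
  linarith

theorem integral_Ioi_half_sub_tsum_log_one_add_exp_neg_mul_mem {ρ : ℝ} (hρ : 0 < ρ) :
    (∫ x in Ioi (1 / 2), log (1 + exp (-ρ * x))) -
      ∑' k : ℕ, log (1 + exp (-ρ * (k + 1))) ∈ Icc 0 (ρ / 24) := by
  have hcells : HasSum (fun k : ℕ => ∫ x in ((k : ℝ) + 1 - 1 / 2)..(k + 1 + 1 / 2),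
      log (1 + exp (-ρ * x))) (∫ x in Ioi (1 / 2), log (1 + exp (-ρ * x))) :=
    (hasSum_intervalIntegral_add_nat (integrableOn_log_one_add_exp_neg_mul_Ioi hρ _)
      fun x _ => log_one_add_exp_neg_mul_nonneg ρ x).congr_fun fun k => by congr 1 <;> ring
  have hpoints : Summable fun k : ℕ => log (1 + exp (-ρ * (k + 1))) :=
    hcells.summable.of_nonneg_of_le (fun k => log_one_add_exp_neg_mul_nonneg ρ _)
      fun k => log_one_add_exp_neg_mul_le_integral ρ (k + 1)
  have herror := hcells.sub hpoints.hasSum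
  have hsinh : ρ / 2 ≤ sinh (ρ / 2) := self_le_sinh_iff.mpr (by positivity)
  refine ⟨herror.nonneg fun k => sub_nonneg.mpr (log_one_add_exp_neg_mul_le_integral ρ _), ?_⟩
  calc _ ≤ ρ ^ 2 / 24 * (2 * sinh (ρ / 2))⁻¹ :=
        hasSum_le (fun k : ℕ => (integral_log_one_add_exp_neg_mul_sub_le hρ.le (k + 1)).trans_eq
          (by ring_nf)) herror ((hasSum_exp_neg_mul_add_half hρ).mul_left _)
    _ ≤ ρ ^ 2 / 24 * ρ⁻¹ := by gcongr; linarith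
    _ = ρ / 24 := by field_simp

/-- As `ρ → 0⁺`, `∑_{k≥1} ln(1 + e^{−ρk}) = π²/(12ρ) − (1/2) ln 2 + O(ρ)`. -/
theorem sum_log_one_add_exp_asymptotic :
    ∃ C > (0 : ℝ), ∃ ρ₀ > (0 : ℝ), ∀ ρ ∈ Set.Ioo (0 : ℝ) ρ₀,
      |(∑' k : ℕ, Real.log (1 + Real.exp (-ρ * (k + 1)))) -
          (π ^ 2 / (12 * ρ) - (1 / 2) * Real.log 2)| ≤ C * ρ := by
  refine ⟨1 / 16, by norm_num, 1, one_pos, fun ρ ⟨hρ, _⟩ => ?_⟩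
  have hsplit := integral_Ioi_eq_intervalIntegral_add (by norm_num : (0 : ℝ) ≤ 1 / 2)
    (integrableOn_log_one_add_exp_neg_mul_Ioi hρ 0)
  rw [integral_log_one_add_exp_neg_mul_Ioi hρ] at hsplit
  obtain ⟨htail₀, htail₁⟩ := integral_Ioi_half_sub_tsum_log_one_add_exp_neg_mul_mem hρ
  have hhead₀ := log_two_div_two_sub_le_intervalIntegral_log_one_add_exp_neg_mul ρ
  have hhead₁ := intervalIntegral_log_one_add_exp_neg_mul_le hρ.le
  rw [abs_le]
  constructor <;> linarith
end
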